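/- arXiv:0903.0550 — 10 statements merged into one kernel-verified Lean document; each statement's English description precedes it below -/
import Mathlib

section
/- Let H be a real Hilbert space and F : H → H a continuous monotone operator. Assume the equation F(u) = f is solvable and let y be its minimal-norm solution. For each a > 0 let V_a be the unique solution of F(V) + aV = f. Then lim_{a→0⁺} ‖V_a − y‖ = 0. -/
open Filter Topology Set
open scoped RealInnerProductSpace

/-- Let `H` be a real Hilbert space and `F : H → H` a continuous monotone
operator.  Assume the equation `F(u) = f` is solvable and let `y` be its minimal-norm
solution.  For each `a > 0` let `V a` be the (unique) solution of `F(V) + a • V = f`.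
Then `‖V a - y‖ → 0` as `a → 0⁺`. -/
theorem dsm_regularized_solution_tendsto_minimal_norm_solution
    {H : Type*} [NormedAddCommGroup H] [InnerProductSpace ℝ H] [CompleteSpace H]
    (F : H → H) (hFcont : Continuous F)
    (hFmono : ∀ u v : H, 0 ≤ ⟪F u - F v, u - v⟫)
    (f y : H) (hy : F y = f) (hymin : ∀ z : H, F z = f → ‖y‖ ≤ ‖z‖)
    (V : ℝ → H) (hV : ∀ a : ℝ, 0 < a → F (V a) + a • V a = f) :
    Tendsto (fun a : ℝ => ‖V a - y‖) (𝓝[>] (0 : ℝ)) (𝓝 0) := by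
  have hFV : ∀ a : ℝ, 0 < a → F (V a) = f - a • V a := fun a ha =>
    eq_sub_of_add_eq (hV a ha)
  -- Step 1: ⟪V a, V a - y⟫ ≤ 0
  have h1 : ∀ a : ℝ, 0 < a → ⟪V a, V a - y⟫ ≤ 0 := by
    intro a ha
    have h := hFmono (V a) y
    rw [hFV a ha, hy] at h
    have : (f - a • V a) - f = (-a) • V a := by
      rw [neg_smul]; abel
    rw [this, real_inner_smul_left] at h
    nlinarith
  -- Step 2: ‖V a‖ ≤ ‖y‖
  have hbound : ∀ a : ℝ, 0 < a → ‖V a‖ ≤ ‖y‖ := by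
    intro a ha
    have h := h1 a ha
    rw [inner_sub_right, real_inner_self_eq_norm_sq] at h
    have hcs := real_inner_le_norm (V a) y
    nlinarith [norm_nonneg (V a), norm_nonneg y]
  -- Step 3: for 0 < b < a, ‖V a‖^2 ≤ ⟪V a, V b⟫
  have h2 : ∀ a b : ℝ, 0 < b → b < a → ‖V a‖ ^ 2 ≤ ⟪V a, V b⟫ := by
    intro a b hb hba
    have ha : (0:ℝ) < a := hb.trans hba
    have h := hFmono (V a) (V b)
    rw [hFV a ha, hFV b hb] at h
    have he : (f - a • V a) - (f - b • V b) = b • V b - a • V a := by abel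
    rw [he, inner_sub_left, real_inner_smul_left, real_inner_smul_left,
      inner_sub_right, inner_sub_right, real_inner_self_eq_norm_sq,
      real_inner_self_eq_norm_sq] at h
    have hn : (0:ℝ) ≤ ‖V a - V b‖ ^ 2 := sq_nonneg _
    rw [@norm_sub_sq_real] at hn
    have hcomm : ⟪V b, V a⟫ = ⟪V a, V b⟫ := real_inner_comm _ _
    nlinarith [mul_nonneg hb.le hn, sub_pos.mpr hba, hcomm]
  -- Step 4: norms are antitone
  have hmono : ∀ a b : ℝ, 0 < b → b < a → ‖V a‖ ≤ ‖V b‖ := by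
    intro a b hb hba
    have h := h2 a b hb hba
    have hcs := real_inner_le_norm (V a) (V b)
    nlinarith [norm_nonneg (V a), norm_nonneg (V b)]
  -- Supremum of squared norms
  set S : Set ℝ := (fun a => ‖V a‖ ^ 2) '' Ioi 0 with hS
  have hSne : S.Nonempty := ⟨‖V 1‖ ^ 2, 1, by norm_num, rfl⟩
  have hSbdd : BddAbove S := by
    refine ⟨‖y‖ ^ 2, ?_⟩
    rintro x ⟨a, ha, rfl⟩
    have h := hbound a ha
    show ‖V a‖ ^ 2 ≤ ‖y‖ ^ 2
    nlinarith [norm_nonneg (V a)]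
  set L : ℝ := sSup S with hL
  have hmem : ∀ a : ℝ, 0 < a → ‖V a‖ ^ 2 ≤ L :=
    fun a ha => le_csSup hSbdd ⟨a, ha, rfl⟩
  -- Cauchy
  have hC : Cauchy (Filter.map V (𝓝[>] (0:ℝ))) := by
    rw [Metric.cauchy_iff]
    constructor
    · exact Filter.map_neBot
    · intro ε hε
      obtain ⟨x, ⟨a0, ha0, rfl⟩, hx0⟩ := exists_lt_of_lt_csSup hSne
        (show L - ε ^ 2 / 2 < L by nlinarith)
      have hx : L - ε ^ 2 / 2 < ‖V a0‖ ^ 2 := hx0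
      have ha0' : (0:ℝ) < a0 := ha0
      refine ⟨V '' Ioc 0 a0, ?_, ?_⟩
      · exact image_mem_map (Ioc_mem_nhdsGT_of_mem ⟨le_refl 0, ha0'⟩)
      · rintro _ ⟨a, ⟨ha, haa⟩, rfl⟩ _ ⟨b, ⟨hb, hbb⟩, rfl⟩
        have key : ∀ c : ℝ, 0 < c → c ≤ a0 → L - ε ^ 2 / 2 < ‖V c‖ ^ 2 := by
          intro c hc hca
          rcases eq_or_lt_of_le hca with h | h
          · rwa [h]
          · have h5 := hmono a0 c hc h
            nlinarith [norm_nonneg (V a0)]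
        have hpab : ‖V a - V b‖ ^ 2 < ε ^ 2 := by
          rcases lt_trichotomy a b with h | h | h
          · have h6 := h2 b a ha h
            have hn : ‖V a - V b‖ ^ 2 = ‖V a‖^2 - 2 * ⟪V a, V b⟫ + ‖V b‖^2 :=
              @norm_sub_sq_real _ _ _ (V a) (V b)
            have hcomm : ⟪V b, V a⟫ = ⟪V a, V b⟫ := real_inner_comm _ _
            have h3 := key b hb hbb
            have h4 := hmem a ha
            nlinarith
          · rw [h]
            simpa using pow_pos hε 2
          · have h6 := h2 a b hb h
            have hn : ‖V a - V b‖ ^ 2 = ‖V a‖^2 - 2 * ⟪V a, V b⟫ + ‖V b‖^2 :=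
              @norm_sub_sq_real _ _ _ (V a) (V b)
            have h3 := key a ha haa
            have h4 := hmem b hb
            nlinarith
        rw [dist_eq_norm]
        nlinarith [norm_nonneg (V a - V b), hε]
  -- limit z
  obtain ⟨z, hz⟩ := CompleteSpace.complete hC
  have hVz : Tendsto V (𝓝[>] (0:ℝ)) (𝓝 z) := hz
  -- F z = f
  have haV : Tendsto (fun a : ℝ => a • V a) (𝓝[>] (0:ℝ)) (𝓝 0) := by
    apply squeeze_zero_norm' (a := fun a : ℝ => a * ‖y‖)
    · filter_upwards [self_mem_nhdsWithin] with a (ha : 0 < a)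
      rw [norm_smul, Real.norm_eq_abs, abs_of_pos ha]
      exact mul_le_mul_of_nonneg_left (hbound a ha) ha.le
    · have h9 : Tendsto (fun a : ℝ => a * ‖y‖) (𝓝 (0:ℝ)) (𝓝 (0 * ‖y‖)) :=
        (continuous_id.mul continuous_const).tendsto 0
      rw [zero_mul] at h9
      exact h9.mono_left nhdsWithin_le_nhds
  have hFz : F z = f := by
    have hl1 : Tendsto (fun a : ℝ => F (V a)) (𝓝[>] (0:ℝ)) (𝓝 (F z)) :=
      (hFcont.tendsto z).comp hVz
    have hl2 : Tendsto (fun a : ℝ => F (V a)) (𝓝[>] (0:ℝ)) (𝓝 f) := by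
      have : Tendsto (fun a : ℝ => f - a • V a) (𝓝[>] (0:ℝ)) (𝓝 (f - 0)) :=
        tendsto_const_nhds.sub haV
      rw [sub_zero] at this
      apply this.congr'
      filter_upwards [self_mem_nhdsWithin] with a (ha : 0 < a)
      exact (hFV a ha).symm
    exact tendsto_nhds_unique hl1 hl2
  -- ‖z‖ = ‖y‖ and z = y
  have hnz : Tendsto (fun a : ℝ => ‖V a‖) (𝓝[>] (0:ℝ)) (𝓝 ‖z‖) :=
    (continuous_norm.tendsto z).comp hVz
  have hzy : ‖z‖ ≤ ‖y‖ := by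
    apply le_of_tendsto hnz
    filter_upwards [self_mem_nhdsWithin] with a (ha : 0 < a)
    exact hbound a ha
  have hyz : ‖y‖ ≤ ‖z‖ := hymin z hFz
  have hiz : ⟪z, z - y⟫ ≤ 0 := by
    have hcont : Continuous fun x : H => ⟪x, x - y⟫ :=
      continuous_id.inner (continuous_id.sub continuous_const)
    have ht : Tendsto (fun a : ℝ => ⟪V a, V a - y⟫) (𝓝[>] (0:ℝ)) (𝓝 ⟪z, z - y⟫) :=
      (hcont.tendsto z).comp hVz
    apply le_of_tendsto ht
    filter_upwards [self_mem_nhdsWithin] with a (ha : 0 < a)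
    exact h1 a ha
  have hzey : z = y := by
    have heq : ‖z‖ = ‖y‖ := le_antisymm hzy hyz
    have h7 : ‖z - y‖ ^ 2 ≤ 0 := by
      rw [@norm_sub_sq_real]
      rw [inner_sub_right, real_inner_self_eq_norm_sq] at hiz
      have heq2 : ‖z‖ ^ 2 = ‖y‖ ^ 2 := by rw [heq]
      linarith
    have := sq_nonneg ‖z - y‖
    have h8 : ‖z - y‖ = 0 := by nlinarith [norm_nonneg (z - y)]
    rwa [norm_sub_eq_zero_iff] at h8
  subst hzey
  have : Tendsto (fun a : ℝ => ‖V a - z‖) (𝓝[>] (0:ℝ)) (𝓝 ‖z - z‖) :=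
    ((continuous_norm.comp (continuous_id.sub continuous_const)).tendsto z).comp hVz
  simpa using this
end

section
/- Let H be a real Hilbert space, F : H → H a continuous monotone operator, f_δ ∈ H, and for each a > 0 let V_{δ,a} be the unique solution of F(V) + aV = f_δ. Then a‖V_{δ,a}‖ ≤ ‖f_δ − F(0)‖ for every a > 0 (so ‖V_{δ,a}‖ = O(1/a) as a → ∞), and lim_{a→∞} ‖F(V_{δ,a}) − f_δ‖ = ‖F(0) − f_δ‖. -/
open Filter Topology Set
open scoped RealInnerProductSpace

/-- Let `H` be a real Hilbert space, `F : H → H` a continuous monotone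
operator, `f_δ ∈ H`, and for each `a > 0` let `V a` be the unique solution of
`F(V) + a • V = f_δ`.  Then `a‖V a‖ ≤ ‖f_δ - F 0‖` for every `a > 0` (so `‖V a‖ = O(1/a)`
as `a → ∞`), and `‖F(V a) - f_δ‖ → ‖F 0 - f_δ‖` as `a → ∞`. -/
theorem dsm_regularized_solution_large_a
    {H : Type*} [NormedAddCommGroup H] [InnerProductSpace ℝ H] [CompleteSpace H]
    (F : H → H) (hFcont : Continuous F)
    (hFmono : ∀ u v : H, 0 ≤ ⟪F u - F v, u - v⟫)
    (fδ : H) (V : ℝ → H) (hV : ∀ a : ℝ, 0 < a → F (V a) + a • V a = fδ) :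
    (∀ a : ℝ, 0 < a → a * ‖V a‖ ≤ ‖fδ - F 0‖) ∧
      Tendsto (fun a : ℝ => ‖F (V a) - fδ‖) atTop (𝓝 ‖F 0 - fδ‖) := by
  have key : ∀ a : ℝ, 0 < a → a * ‖V a‖ ≤ ‖fδ - F 0‖ := by
    intro a ha
    rcases eq_or_ne (V a) 0 with h0 | h0
    · simp [h0, norm_nonneg]
    have hVa := hV a ha
    have haV : a • V a = fδ - F (V a) := by
      have := hVa; rw [add_comm] at this; exact eq_sub_of_add_eq this
    have hmono := hFmono (V a) 0
    simp only [sub_zero] at hmono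
    have h1 : a * ‖V a‖ ^ 2 = ⟪a • V a, V a⟫ := by
      rw [real_inner_smul_left, real_inner_self_eq_norm_sq]
    have h2 : ⟪a • V a, V a⟫ ≤ ⟪fδ - F 0, V a⟫ := by
      rw [haV]
      have : fδ - F (V a) = (fδ - F 0) - (F (V a) - F 0) := by abel
      rw [this, inner_sub_left]
      linarith
    have h3 : ⟪fδ - F 0, V a⟫ ≤ ‖fδ - F 0‖ * ‖V a‖ := real_inner_le_norm _ _
    have hn : 0 < ‖V a‖ := norm_pos_iff.mpr h0
    have : a * ‖V a‖ ^ 2 ≤ ‖fδ - F 0‖ * ‖V a‖ := by linarith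
    nlinarith
  refine ⟨key, ?_⟩
  have hV0 : Tendsto V atTop (𝓝 0) := by
    rw [tendsto_iff_norm_sub_tendsto_zero]
    simp only [sub_zero]
    have hb : Tendsto (fun a : ℝ => ‖fδ - F 0‖ * a⁻¹) atTop (𝓝 0) := by
      simpa using tendsto_inv_atTop_zero.const_mul ‖fδ - F 0‖
    refine squeeze_zero' (Eventually.of_forall fun a => norm_nonneg _) ?_ hb
    filter_upwards [eventually_gt_atTop (0 : ℝ)] with a ha
    have := key a ha
    rw [← le_div_iff₀' ha] at this
    · simpa [div_eq_mul_inv, mul_comm] using this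
  have : Tendsto (fun a : ℝ => F (V a) - fδ) atTop (𝓝 (F 0 - fδ)) :=
    ((hFcont.tendsto 0).comp hV0).sub_const fδ
  exact this.norm
end

section
/- Let H be a real Hilbert space, F : H → H a continuous monotone operator, and f_δ ∈ H with ‖F(0) − f_δ‖ > 0. Let 0 < a₂ < a₁ and let V₁, V₂ be the unique solutions of F(V₁) + a₁V₁ = f_δ and F(V₂) + a₂V₂ = f_δ. Then ‖V₁‖ < ‖V₂‖ and a₁‖V₁‖ ≥ a₂‖V₂‖. Consequently, if a(t) is a strictly decreasing positive function and V_δ(t) solves F(V) + a(t)V = f_δ, then ψ(t) = ‖V_δ(t)‖ is strictly increasing and φ(t) = a(t)‖V_δ(t)‖ = ‖F(V_δ(t)) − f_δ‖ is nonincreasing. -/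
open Filter Topology Set
open scoped RealInnerProductSpace

lemma dsm_key {H : Type*} [NormedAddCommGroup H] [InnerProductSpace ℝ H]
    (F : H → H)
    (hFmono : ∀ u v : H, 0 ≤ ⟪F u - F v, u - v⟫)
    (fδ : H) (hfδ : 0 < ‖F 0 - fδ‖)
    (a₁ a₂ : ℝ) (ha₂ : 0 < a₂) (ha₁₂ : a₂ < a₁)
    (V₁ V₂ : H) (hV₁ : F V₁ + a₁ • V₁ = fδ) (hV₂ : F V₂ + a₂ • V₂ = fδ) :
    ‖V₁‖ < ‖V₂‖ ∧ a₂ * ‖V₂‖ ≤ a₁ * ‖V₁‖ := by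
  have hne : V₁ ≠ V₂ := by
    intro h
    subst h
    have h1 : (a₁ - a₂) • V₁ = 0 := by
      have := hV₁.trans hV₂.symm
      linear_combination (norm := module) this
    have hV10 : V₁ = 0 := by
      rcases smul_eq_zero.mp h1 with h | h
      · exact absurd h (ne_of_gt (sub_pos.mpr ha₁₂))
      · exact h
    rw [hV10, smul_zero, add_zero] at hV₁
    rw [hV₁, sub_self, norm_zero] at hfδ
    exact lt_irrefl 0 hfδ
  have hFdiff : F V₁ - F V₂ = a₂ • V₂ - a₁ • V₁ := by
    have := hV₁.trans hV₂.symm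
    linear_combination (norm := module) this
  have hmono := hFmono V₁ V₂
  rw [hFdiff] at hmono
  have hexp : ⟪a₂ • V₂ - a₁ • V₁, V₁ - V₂⟫ =
      a₂ * ⟪V₁, V₂⟫ - a₂ * ‖V₂‖ ^ 2 - a₁ * ‖V₁‖ ^ 2 + a₁ * ⟪V₁, V₂⟫ := by
    rw [inner_sub_left, inner_sub_right, inner_sub_right, real_inner_smul_left,
      real_inner_smul_left, real_inner_smul_left, real_inner_smul_left,
      real_inner_self_eq_norm_sq, real_inner_self_eq_norm_sq, real_inner_comm V₂ V₁]
    ring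
  rw [hexp] at hmono
  have hCS : ⟪V₁, V₂⟫ ≤ ‖V₁‖ * ‖V₂‖ := real_inner_le_norm V₁ V₂
  have hd : (0 : ℝ) < ‖V₁ - V₂‖ := by
    rw [norm_pos_iff]; exact sub_ne_zero.mpr hne
  have hd2 : ‖V₁ - V₂‖ ^ 2 = ‖V₁‖ ^ 2 - 2 * ⟪V₁, V₂⟫ + ‖V₂‖ ^ 2 := by
    rw [@norm_sub_sq_real]
  have hx : (0 : ℝ) ≤ ‖V₁‖ := norm_nonneg _
  have hy : (0 : ℝ) ≤ ‖V₂‖ := norm_nonneg _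
  have hlt : ‖V₁‖ < ‖V₂‖ := by
    by_contra h
    push_neg at h
    nlinarith [mul_pos ha₂ (mul_pos hd hd),
      mul_nonneg (sub_pos.mpr ha₁₂).le (sub_nonneg.mpr hCS),
      mul_nonneg (mul_nonneg (sub_pos.mpr ha₁₂).le hx) (sub_nonneg.mpr h)]
  refine ⟨hlt, ?_⟩
  nlinarith [mul_nonneg (sub_nonneg.mpr hCS) (le_of_lt (sub_pos.mpr ha₁₂))]

/-- Let `H` be a real Hilbert space, `F : H → H` a continuous monotone
operator, and `f_δ ∈ H` with `‖F 0 - f_δ‖ > 0`.  Let `0 < a₂ < a₁` and let `V₁, V₂` be the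
unique solutions of `F(V₁) + a₁V₁ = f_δ` and `F(V₂) + a₂V₂ = f_δ`.  Then `‖V₁‖ < ‖V₂‖` and
`a₁‖V₁‖ ≥ a₂‖V₂‖`.  Consequently, if `a(t)` is a strictly decreasing positive function on
`[0,∞)` and `V_δ(t)` solves `F(V) + a(t)V = f_δ`, then `ψ(t) = ‖V_δ(t)‖` is strictly
increasing and `φ(t) = a(t)‖V_δ(t)‖ = ‖F(V_δ(t)) - f_δ‖` is nonincreasing. -/
theorem dsm_monotonicity_of_phi_and_psi
    {H : Type*} [NormedAddCommGroup H] [InnerProductSpace ℝ H] [CompleteSpace H]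
    (F : H → H) (hFcont : Continuous F)
    (hFmono : ∀ u v : H, 0 ≤ ⟪F u - F v, u - v⟫)
    (fδ : H) (hfδ : 0 < ‖F 0 - fδ‖)
    (a₁ a₂ : ℝ) (ha₂ : 0 < a₂) (ha₁₂ : a₂ < a₁)
    (V₁ V₂ : H) (hV₁ : F V₁ + a₁ • V₁ = fδ) (hV₂ : F V₂ + a₂ • V₂ = fδ)
    (a : ℝ → ℝ) (hapos : ∀ t ∈ Ici (0 : ℝ), 0 < a t) (hadec : StrictAntiOn a (Ici (0 : ℝ)))
    (Vδ : ℝ → H) (hVδ : ∀ t ∈ Ici (0 : ℝ), F (Vδ t) + a t • Vδ t = fδ) :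
    ‖V₁‖ < ‖V₂‖ ∧ a₂ * ‖V₂‖ ≤ a₁ * ‖V₁‖ ∧
      StrictMonoOn (fun t => ‖Vδ t‖) (Ici (0 : ℝ)) ∧
      AntitoneOn (fun t => a t * ‖Vδ t‖) (Ici (0 : ℝ)) ∧
      ∀ t ∈ Ici (0 : ℝ), a t * ‖Vδ t‖ = ‖F (Vδ t) - fδ‖ := by
  obtain ⟨h1, h2⟩ := dsm_key F hFmono fδ hfδ a₁ a₂ ha₂ ha₁₂ V₁ V₂ hV₁ hV₂
  refine ⟨h1, h2, ?_, ?_, ?_⟩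
  · intro s hs t ht hst
    exact (dsm_key F hFmono fδ hfδ (a s) (a t) (hapos t ht) (hadec hs ht hst)
      (Vδ s) (Vδ t) (hVδ s hs) (hVδ t ht)).1
  · intro s hs t ht hst
    rcases eq_or_lt_of_le hst with rfl | hlt
    · exact le_refl _
    · exact (dsm_key F hFmono fδ hfδ (a s) (a t) (hapos t ht) (hadec hs ht hlt)
        (Vδ s) (Vδ t) (hVδ s hs) (hVδ t ht)).2
  · intro t ht
    have h := hVδ t ht
    have : a t • Vδ t = -(F (Vδ t) - fδ) := by
      linear_combination (norm := module) h
    calc a t * ‖Vδ t‖ = ‖a t • Vδ t‖ := by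
          rw [norm_smul, Real.norm_eq_abs, abs_of_pos (hapos t ht)]
      _ = ‖F (Vδ t) - fδ‖ := by rw [this, norm_neg]
end

section
/- Let H be a real Hilbert space, F : H → H a continuous monotone operator, y ∈ H with F(y) = f, and f_δ ∈ H with ‖f_δ − f‖ ≤ δ. For a > 0 let V_δ be the unique solution of F(V_δ) + aV_δ = f_δ. Then ‖F(V_δ) − f_δ‖² ≤ aδ‖V_δ − y‖ + a‖y‖‖F(V_δ) − f_δ‖. -/
open Filter Topology Set
open scoped RealInnerProductSpace

/-- Let `H` be a real Hilbert space, `F : H → H` a continuous monotone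
operator, `y ∈ H` with `F(y) = f`, and `f_δ ∈ H` with `‖f_δ - f‖ ≤ δ`.  For `a > 0` let
`V_δ` be the unique solution of `F(V_δ) + aV_δ = f_δ`.  Then
`‖F(V_δ) - f_δ‖² ≤ aδ‖V_δ - y‖ + a‖y‖‖F(V_δ) - f_δ‖`. -/
theorem dsm_discrepancy_inequality
    {H : Type*} [NormedAddCommGroup H] [InnerProductSpace ℝ H] [CompleteSpace H]
    (F : H → H) (hFcont : Continuous F)
    (hFmono : ∀ u v : H, 0 ≤ ⟪F u - F v, u - v⟫)
    (f y : H) (hy : F y = f) (δ : ℝ) (hδ : 0 < δ) (fδ : H) (hfδ : ‖fδ - f‖ ≤ δ)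
    (a : ℝ) (ha : 0 < a) (Vδ : H) (hVδ : F Vδ + a • Vδ = fδ) :
    ‖F Vδ - fδ‖ ^ 2 ≤ a * δ * ‖Vδ - y‖ + a * ‖y‖ * ‖F Vδ - fδ‖ := by
  set w := F Vδ - fδ with hwdef
  have hw : w = a • (-Vδ) := by
    have : F Vδ - fδ = -(a • Vδ) := by rw [← hVδ]; abel
    rw [hwdef, this, smul_neg]
  have hsq : ‖w‖ ^ 2 = a * (⟪w, y - Vδ⟫ + ⟪w, -y⟫) := by
    rw [← real_inner_self_eq_norm_sq]
    nth_rewrite 2 [hw]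
    rw [real_inner_smul_right, ← inner_add_right]
    congr 2
    abel
  have hsplit : ⟪w, y - Vδ⟫ = ⟪F Vδ - F y, y - Vδ⟫ + ⟪f - fδ, y - Vδ⟫ := by
    rw [← inner_add_left, hwdef, hy]
    congr 1
    abel
  have h1 : ⟪F Vδ - F y, y - Vδ⟫ ≤ 0 := by
    have := hFmono Vδ y
    have heq : ⟪F Vδ - F y, y - Vδ⟫ = -⟪F Vδ - F y, Vδ - y⟫ := by
      rw [← inner_neg_right]; congr 1; abel
    linarith [heq ▸ neg_nonpos.mpr this]
  have h2 : ⟪f - fδ, y - Vδ⟫ ≤ δ * ‖Vδ - y‖ := by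
    calc ⟪f - fδ, y - Vδ⟫ ≤ ‖f - fδ‖ * ‖y - Vδ‖ := real_inner_le_norm _ _
    _ ≤ δ * ‖Vδ - y‖ := by
        rw [norm_sub_rev Vδ y]
        exact mul_le_mul_of_nonneg_right (by rwa [norm_sub_rev] at hfδ) (norm_nonneg _)
  have h3 : ⟪w, -y⟫ ≤ ‖y‖ * ‖w‖ := by
    calc ⟪w, -y⟫ ≤ ‖w‖ * ‖-y‖ := real_inner_le_norm _ _
    _ = ‖y‖ * ‖w‖ := by rw [norm_neg]; ring
  calc ‖w‖ ^ 2 = a * (⟪w, y - Vδ⟫ + ⟪w, -y⟫) := hsq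
  _ ≤ a * ((δ * ‖Vδ - y‖) + ‖y‖ * ‖w‖) := by
      apply mul_le_mul_of_nonneg_left _ ha.le
      rw [hsplit]
      linarith
  _ = a * δ * ‖Vδ - y‖ + a * ‖y‖ * ‖w‖ := by ring
end

section
/- Let a(t) = d/(c+t)^b and φ(t) = ∫₀ᵗ a(s)²/2 ds, where b ∈ (0, 1/4] and c, d are positive constants, and set θ = 1 − 2b > 0. Then for every t > 0: (d²/2)(1 − 2b/(c^θ d²)) ∫₀ᵗ e^{φ(s)}/(s+c)^{3b} ds < e^{φ(t)}/(c+t)^b. -/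
/-!
With `G(s) = e^{φ(s)}/(c+s)^b` one computes
`G'(s) = e^{φ(s)}/(c+s)^{3b} · (d²/2 - b (c+s)^{-θ})`, and since `(c+s)^{-θ} ≤ c^{-θ}` for `s ≥ 0`
the bracket is at least `d²/2 - b c^{-θ} = (d²/2)(1 - 2b/(c^θ d²))`. Integrating over `[0, t]`
bounds the left-hand side by `G(t) - G(0) < G(t)`.
-/

open Filter Topology Set intervalIntegral

theorem hasDerivAt_integral_of_continuousOn_Ioi {E : Type*} [NormedAddCommGroup E]
    [NormedSpace ℝ E] [CompleteSpace E] {f : ℝ → E} {m a x : ℝ}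
    (hf : ContinuousOn f (Ioi m)) (ha : m < a) (hx : m < x) :
    HasDerivAt (fun u => ∫ s in a..u, f s) (f x) x :=
  integral_hasDerivAt_right
    ((hf.mono fun _ hy => lt_of_lt_of_le (lt_min ha hx) hy.1).intervalIntegrable)
    (hf.stronglyMeasurableAtFilter isOpen_Ioi x hx) (hf.continuousAt (isOpen_Ioi.mem_nhds hx))

theorem hasDerivAt_integral_sq_div_rpow_div_two {b c d x₀ x : ℝ} (hx₀ : -c < x₀) (hx : -c < x) :
    HasDerivAt (fun u => ∫ s in x₀..u, (d / (c + s) ^ b) ^ 2 / 2)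
      (d ^ 2 / 2 / (c + x) ^ (2 * b)) x := by
  have hcont : ContinuousOn (fun s => (d / (c + s) ^ b) ^ 2 / 2) (Ioi (-c)) := by
    refine ContinuousOn.div_const (ContinuousOn.pow (continuousOn_const.div ?_ ?_) 2) 2
    · exact (continuousOn_const.add continuousOn_id).rpow_const
        fun u hu => Or.inl (show c + u ≠ 0 by linarith [mem_Ioi.1 hu])
    · exact fun u hu => (Real.rpow_pos_of_pos (by linarith [mem_Ioi.1 hu]) b).ne'
  refine (hasDerivAt_integral_of_continuousOn_Ioi hcont hx₀ hx).congr_deriv ?_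
  rw [show 2 * b = b * (2 : ℕ) by push_cast; ring, Real.rpow_mul_natCast (by linarith)]
  ring

theorem hasDerivAt_exp_div_rpow {φ : ℝ → ℝ} {A b c s : ℝ} (hs : 0 < c + s)
    (hφ : HasDerivAt φ (A / (c + s) ^ (2 * b)) s) :
    HasDerivAt (fun u => Real.exp (φ u) / (c + u) ^ b)
      (Real.exp (φ s) / (c + s) ^ (3 * b) * (A - b * (c + s) ^ (2 * b - 1))) s := by
  have hpow : HasDerivAt (fun u => (c + u) ^ b) (1 * b * (c + s) ^ (b - 1)) s :=
    ((hasDerivAt_id s).const_add c).rpow_const (Or.inl hs.ne')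
  refine (hφ.exp.div hpow (Real.rpow_pos_of_pos hs b).ne').congr_deriv ?_
  have hpow_mul (n : ℕ) : (c + s) ^ (n * b) = ((c + s) ^ b) ^ n := by
    rw [mul_comm, Real.rpow_mul_natCast hs.le]
  have hx := Real.rpow_pos_of_pos hs b
  rw [Real.rpow_sub hs, Real.rpow_sub hs, Real.rpow_one,
    show (2 : ℝ) = (2 : ℕ) by norm_num, show (3 : ℝ) = (3 : ℕ) by norm_num, hpow_mul, hpow_mul]
  field_simp

theorem half_sq_mul_one_sub_div_le {b c d s : ℝ} (hb : 0 ≤ b) (hb2 : 2 * b ≤ 1) (hc : 0 < c)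
    (hd : d ≠ 0) (hs : 0 ≤ s) :
    d ^ 2 / 2 * (1 - 2 * b / (c ^ (1 - 2 * b) * d ^ 2))
      ≤ d ^ 2 / 2 - b * (c + s) ^ (2 * b - 1) := by
  have hK : d ^ 2 / 2 * (1 - 2 * b / (c ^ (1 - 2 * b) * d ^ 2))
      = d ^ 2 / 2 - b * c ^ (2 * b - 1) := by
    rw [show 2 * b - 1 = -(1 - 2 * b) by ring, Real.rpow_neg hc.le]
    field_simp
  have hmono : (c + s) ^ (2 * b - 1) ≤ c ^ (2 * b - 1) :=
    Real.rpow_le_rpow_of_nonpos hc (le_add_of_nonneg_right hs) (by linarith)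
  rw [hK]
  nlinarith

theorem mul_integral_exp_div_rpow_le_sub {φ : ℝ → ℝ} {b c d t : ℝ} (hb : 0 ≤ b)
    (hb2 : 2 * b ≤ 1) (hc : 0 < c) (hd : d ≠ 0) (ht : 0 ≤ t)
    (hφ : ∀ s ∈ Icc 0 t, HasDerivAt φ (d ^ 2 / 2 / (c + s) ^ (2 * b)) s) :
    d ^ 2 / 2 * (1 - 2 * b / (c ^ (1 - 2 * b) * d ^ 2)) *
        ∫ s in (0 : ℝ)..t, Real.exp (φ s) / (s + c) ^ (3 * b)
      ≤ Real.exp (φ t) / (c + t) ^ b - Real.exp (φ 0) / (c + 0) ^ b := by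
  have hG : ∀ s ∈ Icc 0 t, HasDerivAt (fun u => Real.exp (φ u) / (c + u) ^ b)
      (Real.exp (φ s) / (c + s) ^ (3 * b) * (d ^ 2 / 2 - b * (c + s) ^ (2 * b - 1))) s :=
    fun s hs => hasDerivAt_exp_div_rpow (by linarith [hs.1]) (hφ s hs)
  have hcont : ContinuousOn (fun s => Real.exp (φ s) / (s + c) ^ (3 * b)) (Icc 0 t) := by
    refine ContinuousOn.div (fun s hs => (hφ s hs).continuousAt.continuousWithinAt.rexp) ?_ ?_
    · exact (continuousOn_id.add continuousOn_const).rpow_const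
        fun u hu => Or.inl (show u + c ≠ 0 by linarith [hu.1])
    · exact fun u hu => (Real.rpow_pos_of_pos (by linarith [hu.1]) _).ne'
  rw [← integral_const_mul]
  refine integral_le_sub_of_hasDeriv_right_of_le ht
    (fun s hs => (hG s hs).continuousAt.continuousWithinAt)
    (fun s hs => (hG s (Ioo_subset_Icc_self hs)).hasDerivWithinAt)
    (continuousOn_const.mul hcont).integrableOn_Icc fun s hs => ?_
  rw [add_comm s c, mul_comm]
  exact mul_le_mul_of_nonneg_left (half_sq_mul_one_sub_div_le hb hb2 hc hd hs.1.le)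
    (div_nonneg (Real.exp_pos _).le (Real.rpow_nonneg (by linarith [hs.1]) _))

/-- Let `a(t) = d/(c+t)^b` and `φ(t) = ∫₀ᵗ a(s)²/2 ds`, where
`b ∈ (0, 1/4]` and `c, d` are positive constants, and set `θ = 1 - 2b > 0`.  Then for
every `t > 0`:
`(d²/2)(1 - 2b/(c^θ d²)) ∫₀ᵗ e^{φ(s)}/(s+c)^{3b} ds < e^{φ(t)}/(c+t)^b`. -/
theorem dsm_weighted_exponential_integral_inequality
    (b c d : ℝ) (hb : 0 < b) (hb4 : b ≤ 1 / 4) (hc : 0 < c) (hd : 0 < d)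
    (a φ : ℝ → ℝ) (ha : ∀ t : ℝ, a t = d / (c + t) ^ b)
    (hφ : ∀ t : ℝ, φ t = ∫ s in (0 : ℝ)..t, a s ^ 2 / 2) :
    ∀ t : ℝ, 0 < t →
      d ^ 2 / 2 * (1 - 2 * b / (c ^ (1 - 2 * b) * d ^ 2)) *
          ∫ s in (0 : ℝ)..t, Real.exp (φ s) / (s + c) ^ (3 * b)
        < Real.exp (φ t) / (c + t) ^ b := by
  intro t ht
  have hφ' : ∀ s ∈ Icc 0 t, HasDerivAt φ (d ^ 2 / 2 / (c + s) ^ (2 * b)) s := by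
    intro s hs
    simp only [funext hφ, ha]
    exact hasDerivAt_integral_sq_div_rpow_div_two (by linarith) (by linarith [hs.1])
  have hG₀ : 0 < Real.exp (φ 0) / (c + 0) ^ b := by positivity
  linarith [mul_integral_exp_div_rpow_le_sub hb.le (by linarith) hc hd.ne' ht.le hφ']
end

section
/- Let H be a real Hilbert space, F : H → H a continuous monotone operator, and f_δ ∈ H with ‖F(0) − f_δ‖ > 0. Let a(t) = d/(c+t)^b and φ(t) = ∫₀ᵗ a(s)²/2 ds, where d, c > 0, b ∈ (0, 1/4] and c^{1−2b} d² ≥ 6b. For each t ≥ 0 let V_δ(t) be the unique solution of F(V) + a(t)V = f_δ. Then for every t ≥ 0: e^{−φ(t)} ∫₀ᵗ e^{φ(s)} |a′(s)| ‖V_δ(s)‖ ds ≤ (1/2) a(t) ‖V_δ(t)‖. -/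
open Filter Topology Set intervalIntegral
open scoped RealInnerProductSpace

/-!
Since `a` decreases, monotonicity of `F` makes `‖V_δ‖` nondecreasing, so the integral is at most
`‖V_δ(t)‖ ∫₀ᵗ e^φ |a'|`. The condition `c^{1-2b} d² ≥ 6b` gives `6 |a'| ≤ a³`, hence
`e^φ |a'| ≤ e^φ (a³/4 + a'/2) = (e^φ a / 2)'`, and integrating gives
`∫₀ᵗ e^φ |a'| ≤ e^{φ(t)} a(t) / 2`.
-/

theorem norm_le_norm_of_add_smul_eq {H : Type*} [NormedAddCommGroup H] [InnerProductSpace ℝ H]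
    {F : H → H} {f u v : H} {α β : ℝ} (hF : 0 ≤ ⟪F u - F v, u - v⟫)
    (hu : F u + α • u = f) (hv : F v + β • v = f) (hβ : 0 < β) (hβα : β ≤ α) :
    ‖u‖ ≤ ‖v‖ := by
  have hFuv : F u - F v = β • v - α • u := by
    rw [sub_eq_sub_iff_add_eq_add, hu, add_comm, hv]
  have hinner : α * ‖u‖ ^ 2 + β * ‖v‖ ^ 2 ≤ (α + β) * ⟪u, v⟫ := by
    rw [hFuv] at hF
    simp only [inner_sub_left, inner_sub_right, real_inner_smul_left,
      real_inner_self_eq_norm_sq, real_inner_comm u v] at hF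
    linarith
  have hCS := real_inner_le_norm u v
  by_contra! hlt
  have hαβ : β * ‖v‖ < α * ‖u‖ := by nlinarith [norm_nonneg v]
  nlinarith [mul_pos (sub_pos.2 hlt) (sub_pos.2 hαβ)]

theorem integral_mul_le_integral_mul_of_monotoneOn {w N : ℝ → ℝ} {t₀ t : ℝ} (ht : t₀ ≤ t)
    (hw : ContinuousOn w (Icc t₀ t)) (hw0 : ∀ s ∈ Icc t₀ t, 0 ≤ w s)
    (hN : MonotoneOn N (Icc t₀ t)) :
    ∫ s in t₀..t, w s * N s ≤ (∫ s in t₀..t, w s) * N t := by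
  rw [← integral_mul_const]
  refine integral_mono_on ht ?_ ?_ fun s hs =>
    mul_le_mul_of_nonneg_left (hN hs ⟨ht, le_rfl⟩ hs.2) (hw0 s hs)
  · rw [← uIcc_of_le ht] at hw hN
    exact hN.intervalIntegrable.continuousOn_mul hw
  · exact (hw.intervalIntegrable_of_Icc ht).mul_const _

theorem hasDerivAt_integral_of_continuousOn {E : Type*} [NormedAddCommGroup E] [NormedSpace ℝ E]
    [CompleteSpace E] {f : ℝ → E} {U : Set ℝ} {t₀ t : ℝ} (hU : IsOpen U) (hf : ContinuousOn f U)
    (hsub : uIcc t₀ t ⊆ U) :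
    HasDerivAt (fun x => ∫ s in t₀..x, f s) (f t) t :=
  integral_hasDerivAt_right ((hf.mono hsub).intervalIntegrable)
    (hf.stronglyMeasurableAtFilter hU t (hsub right_mem_uIcc))
    (hf.continuousAt (hU.mem_nhds (hsub right_mem_uIcc)))

theorem integral_exp_mul_abs_deriv_le {a φ : ℝ → ℝ} {t₀ t : ℝ} (ht : t₀ ≤ t)
    (ha : ∀ s ∈ Icc t₀ t, DifferentiableAt ℝ a s) (ha' : ContinuousOn (deriv a) (Icc t₀ t))
    (hφ : ∀ s ∈ Icc t₀ t, HasDerivAt φ (a s ^ 2 / 2) s)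
    (hkey : ∀ s ∈ Icc t₀ t, 6 * |deriv a s| ≤ a s ^ 3) :
    ∫ s in t₀..t, Real.exp (φ s) * |deriv a s|
      ≤ Real.exp (φ t) * a t / 2 - Real.exp (φ t₀) * a t₀ / 2 := by
  have hac : ContinuousOn a (Icc t₀ t) := fun s hs => (ha s hs).continuousAt.continuousWithinAt
  have hφc : ContinuousOn φ (Icc t₀ t) := fun s hs => (hφ s hs).continuousAt.continuousWithinAt
  set g' : ℝ → ℝ := fun s => (Real.exp (φ s) * (a s ^ 2 / 2) * a s + Real.exp (φ s) * deriv a s) / 2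
  have hg : ∀ s ∈ uIcc t₀ t, HasDerivAt (fun x => Real.exp (φ x) * a x / 2) (g' s) s := by
    rw [uIcc_of_le ht]
    exact fun s hs => ((hφ s hs).exp.mul (ha s hs).hasDerivAt).div_const 2
  have hg'i : IntervalIntegrable g' MeasureTheory.volume t₀ t :=
    ContinuousOn.intervalIntegrable_of_Icc ht (by fun_prop)
  calc ∫ s in t₀..t, Real.exp (φ s) * |deriv a s|
      ≤ ∫ s in t₀..t, g' s := by
        refine integral_mono_on ht (ContinuousOn.intervalIntegrable_of_Icc ht (by fun_prop)) hg'i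
          fun s hs => ?_
        simp only [g']
        have he := Real.exp_pos (φ s)
        nlinarith [mul_le_mul_of_nonneg_left (hkey s hs) he.le,
          mul_le_mul_of_nonneg_left (neg_abs_le (deriv a s)) he.le]
    _ = _ := integral_eq_sub_of_hasDerivAt hg hg'i

section PowerDecay

variable {b c d : ℝ}

theorem hasDerivAt_div_rpow {s : ℝ} (hs : 0 < c + s) :
    HasDerivAt (fun x => d / (c + x) ^ b) (-(b * (d / (c + s) ^ b) / (c + s))) s := by
  have hpow : 0 < (c + s) ^ b := Real.rpow_pos_of_pos hs b
  have h : HasDerivAt (fun x => d / (c + x) ^ b)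
      ((0 * (c + s) ^ b - d * (1 * b * (c + s) ^ (b - 1))) / ((c + s) ^ b) ^ 2) s :=
    (hasDerivAt_const s d).div
      (((hasDerivAt_id' s).const_add c).rpow_const (Or.inl hs.ne')) hpow.ne'
  refine h.congr_deriv ?_
  rw [Real.rpow_sub_one hs.ne']
  field_simp
  ring

theorem continuousOn_div_rpow : ContinuousOn (fun x => d / (c + x) ^ b) (Ioi (-c)) :=
  fun s (hs : -c < s) => (hasDerivAt_div_rpow (by linarith)).continuousAt.continuousWithinAt

theorem continuousOn_deriv_div_rpow :
    ContinuousOn (deriv fun x => d / (c + x) ^ b) (Ioi (-c)) := by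
  have hpos : ∀ s ∈ Ioi (-c), 0 < c + s := fun s (hs : -c < s) => by linarith
  refine ContinuousOn.congr ?_ fun s hs => (hasDerivAt_div_rpow (hpos s hs)).deriv
  exact ((continuousOn_div_rpow.const_mul b).div (by fun_prop) fun s hs => (hpos s hs).ne').neg

theorem abs_deriv_div_rpow {s : ℝ} (hb : 0 ≤ b) (hd : 0 ≤ d) (hs : 0 < c + s) :
    |deriv (fun x => d / (c + x) ^ b) s| = b * (d / (c + s) ^ b) / (c + s) := by
  rw [(hasDerivAt_div_rpow hs).deriv, abs_neg]
  exact abs_of_nonneg (by have := Real.rpow_nonneg hs.le b; positivity)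

theorem antitoneOn_div_rpow (hb : 0 ≤ b) (hd : 0 ≤ d) :
    AntitoneOn (fun x => d / (c + x) ^ b) (Ioi (-c)) := fun s (hs : -c < s) s' _ hss' =>
  div_le_div_of_nonneg_left hd (Real.rpow_pos_of_pos (by linarith) b)
    (Real.rpow_le_rpow (by linarith) (by linarith) hb)

theorem six_mul_div_le_div_rpow_cube {s : ℝ} (hc : 0 < c) (hs : 0 ≤ s) (hd : 0 ≤ d)
    (hb : b ≤ 1 / 2) (hcd : 6 * b ≤ c ^ (1 - 2 * b) * d ^ 2) :
    6 * (b * (d / (c + s) ^ b) / (c + s)) ≤ (d / (c + s) ^ b) ^ 3 := by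
  have hcs : 0 < c + s := by linarith
  set A := d / (c + s) ^ b
  have hsq : A ^ 2 * (c + s) = d ^ 2 * (c + s) ^ (1 - 2 * b) := by
    rw [div_pow, ← Real.rpow_mul_natCast hcs.le, Real.rpow_sub hcs, Real.rpow_one]
    push_cast
    ring_nf
  have hgrowth : c ^ (1 - 2 * b) ≤ (c + s) ^ (1 - 2 * b) :=
    Real.rpow_le_rpow hc.le (by linarith) (by linarith)
  have h6 : 6 * b ≤ A ^ 2 * (c + s) := by
    rw [hsq]
    nlinarith [sq_nonneg d]
  calc 6 * (b * A / (c + s)) = 6 * b * (A / (c + s)) := by ring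
    _ ≤ A ^ 2 * (c + s) * (A / (c + s)) := by gcongr
    _ = A ^ 3 := by field_simp

theorem integral_exp_mul_abs_deriv_div_rpow_le {t : ℝ} {φ : ℝ → ℝ} (hb : 0 ≤ b)
    (hb2 : b ≤ 1 / 2) (hc : 0 < c) (hd : 0 ≤ d) (hcd : 6 * b ≤ c ^ (1 - 2 * b) * d ^ 2)
    (ht : 0 ≤ t) (hφ : ∀ s ∈ Icc 0 t, HasDerivAt φ ((d / (c + s) ^ b) ^ 2 / 2) s) :
    ∫ s in (0 : ℝ)..t, Real.exp (φ s) * |deriv (fun x => d / (c + x) ^ b) s|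
      ≤ Real.exp (φ t) * (d / (c + t) ^ b) / 2 := by
  have hpos : ∀ s ∈ Icc 0 t, 0 < c + s := fun s hs => by linarith [hs.1]
  have hIcc : Icc 0 t ⊆ Ioi (-c) := fun s hs => show -c < s by linarith [hpos s hs]
  have hbound := integral_exp_mul_abs_deriv_le ht
    (fun s hs => (hasDerivAt_div_rpow (hpos s hs)).differentiableAt)
    (continuousOn_deriv_div_rpow.mono hIcc) hφ fun s hs => by
      rw [abs_deriv_div_rpow hb hd (hpos s hs)]
      exact six_mul_div_le_div_rpow_cube hc hs.1 hd hb2 hcd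
  have h0 : 0 ≤ Real.exp (φ 0) * (d / (c + 0) ^ b) / 2 := by positivity
  linarith

end PowerDecay

theorem dsm_weighted_integral_of_Vdelta_bound_general
    {H : Type*} [NormedAddCommGroup H] [InnerProductSpace ℝ H]
    (F : H → H)
    (hFmono : ∀ u v : H, 0 ≤ ⟪F u - F v, u - v⟫)
    (fδ : H)
    (b c d : ℝ) (hb : 0 < b) (hb4 : b ≤ 1 / 4) (hc : 0 < c) (hd : 0 < d)
    (hcd : 6 * b ≤ c ^ (1 - 2 * b) * d ^ 2)
    (a φ : ℝ → ℝ) (ha : ∀ t : ℝ, a t = d / (c + t) ^ b)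
    (hφ : ∀ t : ℝ, φ t = ∫ s in (0 : ℝ)..t, a s ^ 2 / 2)
    (Vδ : ℝ → H) (hVδ : ∀ t ∈ Ici (0 : ℝ), F (Vδ t) + a t • Vδ t = fδ) :
    ∀ t ∈ Ici (0 : ℝ),
      Real.exp (-φ t) * ∫ s in (0 : ℝ)..t, Real.exp (φ s) * |deriv a s| * ‖Vδ s‖
        ≤ 1 / 2 * a t * ‖Vδ t‖ := by
  intro t (ht : 0 ≤ t)
  obtain rfl : a = fun x => d / (c + x) ^ b := funext ha
  have hIcc : Icc 0 t ⊆ Ioi (-c) := (Icc_subset_Ioi_iff ht).2 (by linarith)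
  have hφD : ∀ s ∈ Icc 0 t, HasDerivAt φ ((d / (c + s) ^ b) ^ 2 / 2) s := fun s hs => by
    rw [show φ = _ from funext hφ]
    refine hasDerivAt_integral_of_continuousOn isOpen_Ioi
      ((continuousOn_div_rpow.pow 2).div_const 2) ?_
    exact (uIcc_of_le hs.1).trans_subset ((Icc_subset_Icc_right hs.2).trans hIcc)
  have hVmono : MonotoneOn (fun s => ‖Vδ s‖) (Icc 0 t) := fun s hs s' hs' hss' =>
    norm_le_norm_of_add_smul_eq (hFmono _ _) (hVδ s hs.1) (hVδ s' hs'.1)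
      (div_pos hd (Real.rpow_pos_of_pos (by linarith [hs'.1]) b))
      (antitoneOn_div_rpow hb.le hd.le (hIcc hs) (hIcc hs') hss')
  have hφc : ContinuousOn φ (Icc 0 t) := fun s hs => (hφD s hs).continuousAt.continuousWithinAt
  have hderivc := (continuousOn_deriv_div_rpow (b := b) (d := d)).mono hIcc
  calc Real.exp (-φ t) * ∫ s in (0 : ℝ)..t, Real.exp (φ s) * |deriv _ s| * ‖Vδ s‖
      ≤ Real.exp (-φ t) * ((∫ s in (0 : ℝ)..t, Real.exp (φ s) * |deriv _ s|) * ‖Vδ t‖) := by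
        gcongr
        exact integral_mul_le_integral_mul_of_monotoneOn ht (by fun_prop)
          (fun s _ => by positivity) hVmono
    _ ≤ Real.exp (-φ t) * (Real.exp (φ t) * (d / (c + t) ^ b) / 2 * ‖Vδ t‖) := by
        gcongr
        exact integral_exp_mul_abs_deriv_div_rpow_le hb.le (by linarith) hc hd.le hcd ht hφD
    _ = 1 / 2 * (d / (c + t) ^ b) * ‖Vδ t‖ := by
        rw [Real.exp_neg]
        field_simp

/-- Let `H` be a real Hilbert space, `F : H → H` a continuous monotone
operator, and `f_δ ∈ H` with `‖F 0 - f_δ‖ > 0`.  Let `a(t) = d/(c+t)^b` and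
`φ(t) = ∫₀ᵗ a(s)²/2 ds`, where `d, c > 0`, `b ∈ (0, 1/4]` and `c^{1-2b} d² ≥ 6b`.
For each `t ≥ 0` let `V_δ(t)` be the unique solution of `F(V) + a(t)V = f_δ`.  Then for
every `t ≥ 0`:
`e^{-φ(t)} ∫₀ᵗ e^{φ(s)} |a′(s)| ‖V_δ(s)‖ ds ≤ (1/2) a(t) ‖V_δ(t)‖`. -/
theorem dsm_weighted_integral_of_Vdelta_bound
    {H : Type*} [NormedAddCommGroup H] [InnerProductSpace ℝ H] [CompleteSpace H]
    (F : H → H) (hFcont : Continuous F)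
    (hFmono : ∀ u v : H, 0 ≤ ⟪F u - F v, u - v⟫)
    (fδ : H) (hfδ : 0 < ‖F 0 - fδ‖)
    (b c d : ℝ) (hb : 0 < b) (hb4 : b ≤ 1 / 4) (hc : 0 < c) (hd : 0 < d)
    (hcd : 6 * b ≤ c ^ (1 - 2 * b) * d ^ 2)
    (a φ : ℝ → ℝ) (ha : ∀ t : ℝ, a t = d / (c + t) ^ b)
    (hφ : ∀ t : ℝ, φ t = ∫ s in (0 : ℝ)..t, a s ^ 2 / 2)
    (Vδ : ℝ → H) (hVδ : ∀ t ∈ Ici (0 : ℝ), F (Vδ t) + a t • Vδ t = fδ) :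
    ∀ t ∈ Ici (0 : ℝ),
      Real.exp (-φ t) * ∫ s in (0 : ℝ)..t, Real.exp (φ s) * |deriv a s| * ‖Vδ s‖
        ≤ 1 / 2 * a t * ‖Vδ t‖ :=
  dsm_weighted_integral_of_Vdelta_bound_general F hFmono fδ b c d hb hb4 hc hd hcd a φ ha hφ Vδ hVδ
end

section
/- Let α(t), β(t), γ(t) be continuous nonnegative functions on [t₀, ∞), t₀ ≥ 0 fixed. Suppose there exists a function μ ∈ C¹[t₀, ∞) with μ > 0 and lim_{t→∞} μ(t) = ∞ such that for all t ≥ t₀: 0 ≤ α(t) ≤ (μ(t)/2)(γ(t) − μ′(t)/μ(t)) and β(t) ≤ (1/(2μ(t)))(γ(t) − μ′(t)/μ(t)), and μ(t₀) g(t₀) < 1. If g : [t₀, ∞) → [0, ∞) is differentiable and satisfies g′(t) ≤ −γ(t) g(t) + α(t) g(t)² + β(t) for all t ≥ t₀, then 0 ≤ g(t) < 1/μ(t) for all t ≥ t₀. The same conclusion holds on any interval [t₀, T) on which the hypotheses hold. -/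
/-!
Put `ψ = 1 - μ g`. The two bounds on `α` and `β` are exactly what makes the Riccati inequality
for `g` turn into `ψ' ≥ -q ψ²` with `q = (γ - μ'/μ)/2 ≥ 0`. Since `g ≥ 0` forces `ψ ≤ 1`, on any
stretch where `ψ > 0` this gives `ψ' ≥ -K ψ`, where `K` bounds the continuous `q` on a compact
interval; then `ψ e^{K t}` is nondecreasing there, so `ψ` cannot reach its first zero.
-/

open Filter Topology Set

theorem monotoneOn_mul_exp_of_neg_mul_le_deriv {f f' : ℝ → ℝ} {a b K : ℝ}
    (hf : ContinuousOn f (Icc a b)) (hf' : ∀ t ∈ Ioo a b, HasDerivAt f (f' t) t)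
    (hK : ∀ t ∈ Ioo a b, -(K * f t) ≤ f' t) :
    MonotoneOn (fun t => f t * Real.exp (K * t)) (Icc a b) := by
  refine monotoneOn_of_hasDerivWithinAt_nonneg (convex_Icc a b) (hf.mul (by fun_prop))
    (f' := fun t => (f' t + K * f t) * Real.exp (K * t)) (fun t ht => ?_) (fun t ht => ?_)
  all_goals rw [interior_Icc] at ht
  · have hexp : HasDerivAt (fun t => Real.exp (K * t)) (Real.exp (K * t) * K) t := by
      simpa using ((hasDerivAt_id t).const_mul K).exp
    exact ((hf' t ht).mul hexp).hasDerivWithinAt.congr_deriv (by ring)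
  · exact mul_nonneg (by linarith [hK t ht]) (Real.exp_pos _).le

theorem ContinuousOn.exists_first_nonpos {f : ℝ → ℝ} {a b c : ℝ}
    (hf : ContinuousOn f (Icc a b)) (ha : 0 < f a) (hc : c ∈ Icc a b) (hfc : f c ≤ 0) :
    ∃ t₁ ∈ Ioc a b, f t₁ ≤ 0 ∧ ∀ t ∈ Ico a t₁, 0 < f t := by
  set A := {t ∈ Icc a b | f t ≤ 0}
  have hA : IsClosed A := hf.preimage_isClosed_of_isClosed isClosed_Icc isClosed_Iic
  have hAbdd : BddBelow A := ⟨a, fun t ht => ht.1.1⟩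
  obtain ⟨⟨ha₁, hb₁⟩, hf₁⟩ : sInf A ∈ A := hA.csInf_mem ⟨c, hc, hfc⟩ hAbdd
  refine ⟨sInf A, ⟨lt_of_le_of_ne ha₁ ?_, hb₁⟩, hf₁, fun t ht => ?_⟩
  · intro h
    exact (h ▸ hf₁).not_gt ha
  · by_contra! h
    exact ht.2.not_ge (csInf_le hAbdd ⟨⟨ht.1, ht.2.le.trans hb₁⟩, h⟩)

theorem pos_of_neg_mul_le_deriv {f f' : ℝ → ℝ} {a b K : ℝ}
    (hf : ContinuousOn f (Icc a b)) (hf' : ∀ t ∈ Ioo a b, HasDerivAt f (f' t) t)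
    (hK : ∀ t ∈ Ioo a b, 0 < f t → -(K * f t) ≤ f' t) (ha : 0 < f a) :
    ∀ t ∈ Icc a b, 0 < f t := by
  by_contra! ⟨c, hc, hfc⟩
  obtain ⟨t₁, ⟨hat₁, ht₁b⟩, hf₁, hpos⟩ := hf.exists_first_nonpos ha hc hfc
  have hsub : Ioo a t₁ ⊆ Ioo a b := Ioo_subset_Ioo_right ht₁b
  have hmono := monotoneOn_mul_exp_of_neg_mul_le_deriv (hf.mono (Icc_subset_Icc_right ht₁b))
    (fun t ht => hf' t (hsub ht)) (fun t ht => hK t (hsub ht) (hpos t (Ioo_subset_Ico_self ht)))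
  have hle := hmono (left_mem_Icc.2 hat₁.le) (right_mem_Icc.2 hat₁.le) hat₁.le
  exact (mul_pos ha (Real.exp_pos _)).not_ge
    (hle.trans (mul_nonpos_of_nonpos_of_nonneg hf₁ (Real.exp_pos _).le))

theorem neg_mul_sq_le_deriv_one_sub_mul {α β γ μ μ' g g' : ℝ} (hμ : 0 < μ)
    (hα : α ≤ μ / 2 * (γ - μ' / μ)) (hβ : β ≤ 1 / (2 * μ) * (γ - μ' / μ))
    (hg' : g' ≤ -γ * g + α * g ^ 2 + β) :
    -((γ - μ' / μ) / 2 * (1 - μ * g) ^ 2) ≤ -(μ' * g + μ * g') := by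
  set c := γ - μ' / μ
  have hμ' : μ' = μ * (γ - c) := by simp only [c]; field_simp; ring
  have hβ' : μ * β ≤ c / 2 := by
    have hc : μ * (1 / (2 * μ) * c) = c / 2 := by field_simp
    linarith [mul_le_mul_of_nonneg_left hβ hμ.le]
  clear_value c
  subst hμ'
  -- the bounds on `α g²` and `β` leave `μcg - μ²cg²/2 - c/2 = -(c/2)(1 - μg)²`
  nlinarith [mul_le_mul_of_nonneg_left hα (by positivity : 0 ≤ μ * g ^ 2),
    mul_le_mul_of_nonneg_left hg' hμ.le]

theorem mul_lt_one_of_riccati_le {t₀ b : ℝ} {α β γ μ μ' g g' : ℝ → ℝ}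
    (hγc : ContinuousOn γ (Ici t₀)) (hμ'c : ContinuousOn μ' (Ici t₀))
    (hαnn : ∀ t ∈ Ici t₀, 0 ≤ α t)
    (hμ : ∀ t ∈ Ici t₀, HasDerivAt μ (μ' t) t) (hμpos : ∀ t ∈ Ici t₀, 0 < μ t)
    (hg : ∀ t ∈ Ici t₀, HasDerivAt g (g' t) t) (hgnn : ∀ t ∈ Ici t₀, 0 ≤ g t)
    (hgineq : ∀ t ∈ Ici t₀, g' t ≤ -γ t * g t + α t * g t ^ 2 + β t)
    (hinit : μ t₀ * g t₀ < 1) (hb : t₀ ≤ b)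
    (hα : ∀ t ∈ Icc t₀ b, α t ≤ μ t / 2 * (γ t - μ' t / μ t))
    (hβ : ∀ t ∈ Icc t₀ b, β t ≤ 1 / (2 * μ t) * (γ t - μ' t / μ t)) :
    μ b * g b < 1 := by
  set q : ℝ → ℝ := fun t => (γ t - μ' t / μ t) / 2
  have hψ : ∀ t ∈ Ici t₀, HasDerivAt (fun t => 1 - μ t * g t) (-(μ' t * g t + μ t * g' t)) t :=
    fun t ht => ((hμ t ht).mul (hg t ht)).const_sub 1
  have hqc : ContinuousOn q (Icc t₀ b) :=
    ((hγc.sub (hμ'c.div (fun t ht => (hμ t ht).continuousAt.continuousWithinAt)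
      (fun t ht => (hμpos t ht).ne'))).div_const 2).mono Icc_subset_Ici_self
  obtain ⟨K, hK⟩ := isCompact_Icc.bddAbove_image hqc
  have hderiv : ∀ t ∈ Ioo t₀ b, 0 < 1 - μ t * g t →
      -(K * (1 - μ t * g t)) ≤ -(μ' t * g t + μ t * g' t) := by
    intro t ht hψpos
    have htI : t ∈ Ici t₀ := ht.1.le
    have htIcc : t ∈ Icc t₀ b := Ioo_subset_Icc_self ht
    have hq : 0 ≤ q t := div_nonneg (nonneg_of_mul_nonneg_right
      ((hαnn t htI).trans (hα t htIcc)) (half_pos (hμpos t htI))) zero_le_two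
    have hψle : 1 - μ t * g t ≤ 1 := sub_le_self 1 (mul_nonneg (hμpos t htI).le (hgnn t htI))
    have hqK : q t ≤ K := hK (mem_image_of_mem q htIcc)
    calc -(K * (1 - μ t * g t)) ≤ -(q t * (1 - μ t * g t) ^ 2) := by
          nlinarith [mul_le_mul_of_nonneg_left hψle (mul_nonneg hq hψpos.le)]
      _ ≤ -(μ' t * g t + μ t * g' t) :=
          neg_mul_sq_le_deriv_one_sub_mul (hμpos t htI) (hα t htIcc) (hβ t htIcc) (hgineq t htI)
  have hpos := pos_of_neg_mul_le_deriv
    (fun t ht => (hψ t ht.1).continuousAt.continuousWithinAt)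
    (fun t ht => hψ t ht.1.le) hderiv (sub_pos.2 hinit)
  linarith [hpos b (right_mem_Icc.2 hb)]

theorem differential_inequality_lemma_general
    (t₀ : ℝ) (α β γ μ μ' g g' : ℝ → ℝ)
    (hγc : ContinuousOn γ (Ici t₀))
    (hαnn : ∀ t ∈ Ici t₀, 0 ≤ α t)
    (hμ : ∀ t ∈ Ici t₀, HasDerivAt μ (μ' t) t) (hμ'c : ContinuousOn μ' (Ici t₀))
    (hμpos : ∀ t ∈ Ici t₀, 0 < μ t)
    (hg : ∀ t ∈ Ici t₀, HasDerivAt g (g' t) t) (hgnn : ∀ t ∈ Ici t₀, 0 ≤ g t)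
    (hgineq : ∀ t ∈ Ici t₀, g' t ≤ -γ t * g t + α t * g t ^ 2 + β t)
    (hinit : μ t₀ * g t₀ < 1) :
    ((Tendsto μ atTop atTop) →
      (∀ t ∈ Ici t₀, α t ≤ μ t / 2 * (γ t - μ' t / μ t)) →
      (∀ t ∈ Ici t₀, β t ≤ 1 / (2 * μ t) * (γ t - μ' t / μ t)) →
      ∀ t ∈ Ici t₀, 0 ≤ g t ∧ g t < 1 / μ t) ∧
    (∀ T : ℝ, t₀ < T →
      (∀ t ∈ Ico t₀ T, α t ≤ μ t / 2 * (γ t - μ' t / μ t)) →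
      (∀ t ∈ Ico t₀ T, β t ≤ 1 / (2 * μ t) * (γ t - μ' t / μ t)) →
      ∀ t ∈ Ico t₀ T, 0 ≤ g t ∧ g t < 1 / μ t) := by
  have bound : ∀ b ∈ Ici t₀,
      (∀ t ∈ Icc t₀ b, α t ≤ μ t / 2 * (γ t - μ' t / μ t)) →
      (∀ t ∈ Icc t₀ b, β t ≤ 1 / (2 * μ t) * (γ t - μ' t / μ t)) →
      0 ≤ g b ∧ g b < 1 / μ b := fun b hb hα hβ =>
    ⟨hgnn b hb, by
      rw [lt_div_iff₀ (hμpos b hb), mul_comm]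
      exact mul_lt_one_of_riccati_le hγc hμ'c hαnn hμ hμpos hg hgnn hgineq hinit hb hα hβ⟩
  refine ⟨fun _ hα hβ t ht => bound t ht (fun s hs => hα s hs.1) (fun s hs => hβ s hs.1),
    fun T _ hα hβ t ht => bound t ht.1 (fun s hs => hα s ⟨hs.1, hs.2.trans_lt ht.2⟩)
      (fun s hs => hβ s ⟨hs.1, hs.2.trans_lt ht.2⟩)⟩

/-- (The basic differential-inequality lemma, \cite[p.97]{R499}.)
Let `α, β, γ` be continuous nonnegative functions on `[t₀, ∞)`, `t₀ ≥ 0` fixed.  Suppose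
there is `μ ∈ C¹[t₀, ∞)` with `μ > 0` and `μ(t) → ∞` such that
`0 ≤ α(t) ≤ (μ(t)/2)(γ(t) - μ′(t)/μ(t))`, `β(t) ≤ (1/(2μ(t)))(γ(t) - μ′(t)/μ(t))`, and
`μ(t₀)g(t₀) < 1`.  If `g ≥ 0` is differentiable and satisfies
`g′(t) ≤ -γ(t)g(t) + α(t)g(t)² + β(t)` for `t ≥ t₀`, then `0 ≤ g(t) < 1/μ(t)` for all
`t ≥ t₀`.  The same conclusion holds on any interval `[t₀, T)` on which the corresponding
hypotheses hold. -/
theorem differential_inequality_lemma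
    (t₀ : ℝ) (ht₀ : 0 ≤ t₀) (α β γ μ μ' g g' : ℝ → ℝ)
    (hαc : ContinuousOn α (Ici t₀)) (hβc : ContinuousOn β (Ici t₀))
    (hγc : ContinuousOn γ (Ici t₀))
    (hαnn : ∀ t ∈ Ici t₀, 0 ≤ α t) (hβnn : ∀ t ∈ Ici t₀, 0 ≤ β t)
    (hγnn : ∀ t ∈ Ici t₀, 0 ≤ γ t)
    (hμ : ∀ t ∈ Ici t₀, HasDerivAt μ (μ' t) t) (hμ'c : ContinuousOn μ' (Ici t₀))
    (hμpos : ∀ t ∈ Ici t₀, 0 < μ t)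
    (hg : ∀ t ∈ Ici t₀, HasDerivAt g (g' t) t) (hgnn : ∀ t ∈ Ici t₀, 0 ≤ g t)
    (hgineq : ∀ t ∈ Ici t₀, g' t ≤ -γ t * g t + α t * g t ^ 2 + β t)
    (hinit : μ t₀ * g t₀ < 1) :
    ((Tendsto μ atTop atTop) →
      (∀ t ∈ Ici t₀, α t ≤ μ t / 2 * (γ t - μ' t / μ t)) →
      (∀ t ∈ Ici t₀, β t ≤ 1 / (2 * μ t) * (γ t - μ' t / μ t)) →
      ∀ t ∈ Ici t₀, 0 ≤ g t ∧ g t < 1 / μ t) ∧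
    (∀ T : ℝ, t₀ < T →
      (∀ t ∈ Ico t₀ T, α t ≤ μ t / 2 * (γ t - μ' t / μ t)) →
      (∀ t ∈ Ico t₀ T, β t ≤ 1 / (2 * μ t) * (γ t - μ' t / μ t)) →
      ∀ t ∈ Ico t₀ T, 0 ≤ g t ∧ g t < 1 / μ t) :=
  differential_inequality_lemma_general t₀ α β γ μ μ' g g' hγc hαnn hμ hμ'c hμpos hg hgnn hgineq
    hinit
end

section
/- Let M₁, c₀, c₁, g₀ be positive constants and let y ≠ 0 be an element of a real Hilbert space H. Then there exist λ > 0 and a function a ∈ C¹[0, ∞) with a(t) > 0, a strictly decreasing, lim_{t→∞} a(t) = 0, and |a′(t)| ≤ a(t)³/4 for all t, such that: (i) M₁/‖y‖ ≤ λ; (ii) c₀(M₁ + a(t)) ≤ (λ/(2a(t)²))(a(t)² − 2|a′(t)|/a(t)) for all t ≥ 0; (iii) c₁ |a′(t)|/a(t) ≤ (a(t)²/(2λ))(a(t)² − 2|a′(t)|/a(t)) for all t ≥ 0; (iv) (λ/a(0)²) g₀ < 1. In particular, functions of the form a(t) = d/(c+t)^b with 0 < b ≤ 1/4, c ≥ 1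 and d sufficiently large can be chosen. -/
/-!
Take `a t = d / (1 + t) ^ (1/4)`. Then `|a'| / a = 1 / (4 (1 + t)) = a ^ 4 / (4 d ^ 4)`, so for
`d ≥ 1` we get `|a'| ≤ a ^ 3 / 4`, hence `a ^ 2 - 2 |a'| / a ≥ a ^ 2 / 2`. Since moreover `a ≤ d`
and `a 0 = d`, conditions (ii)–(iv) reduce to `4 c₀ (M₁ + d) ≤ λ`, `c₁ λ ≤ d ^ 4` and
`g₀ λ < d ^ 2`. With `λ = M₁ / ‖y‖ + 4 c₀ (M₁ + d)`, affine in `d`, these hold for `d` large.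
-/

open Filter Topology Set

noncomputable def rpowDecay (b c d t : ℝ) : ℝ := d / (c + t) ^ b

section rpowDecay

variable {b c d : ℝ}

lemma rpowDecay_pos (hd : 0 < d) {t : ℝ} (ht : 0 < c + t) : 0 < rpowDecay b c d t :=
  div_pos hd (Real.rpow_pos_of_pos ht b)

lemma hasDerivAt_rpowDecay {t : ℝ} (ht : 0 < c + t) :
    HasDerivAt (rpowDecay b c d) (-b * rpowDecay b c d t / (c + t)) t := by
  have hpow : HasDerivAt (fun s => (c + s) ^ b) (b * (c + t) ^ (b - 1)) t := by
    simpa using ((hasDerivAt_id t).const_add c).rpow_const (p := b) (Or.inl ht.ne')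
  refine ((hasDerivAt_const t d).div hpow (Real.rpow_pos_of_pos ht b).ne').congr_deriv ?_
  rw [rpowDecay, Real.rpow_sub_one ht.ne']
  field_simp
  ring

lemma contDiffOn_rpowDecay {n : WithTop ℕ∞} : ContDiffOn ℝ n (rpowDecay b c d) (Ioi (-c)) := by
  intro t ht
  have ht : 0 < c + t := by rw [mem_Ioi] at ht; linarith
  have hpow : ContDiffAt ℝ n (fun s => (c + s) ^ b) t :=
    (Real.contDiffAt_rpow_const_of_ne ht.ne').comp t (contDiffAt_const.add contDiffAt_id)
  exact (contDiffAt_const.div hpow (Real.rpow_pos_of_pos ht b).ne').contDiffWithinAt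

lemma strictAntiOn_rpowDecay (hb : 0 < b) (hd : 0 < d) :
    StrictAntiOn (rpowDecay b c d) (Ioi (-c)) := by
  intro s hs t ht hst
  rw [mem_Ioi] at hs ht
  exact div_lt_div_of_pos_left hd (Real.rpow_pos_of_pos (by linarith) b)
    (Real.rpow_lt_rpow (by linarith) (by linarith) hb)

lemma tendsto_rpowDecay_atTop (hb : 0 < b) : Tendsto (rpowDecay b c d) atTop (𝓝 0) :=
  tendsto_const_nhds.div_atTop
    ((tendsto_rpow_atTop hb).comp (tendsto_atTop_add_const_left atTop c tendsto_id))

end rpowDecay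

section quarterDecay

variable {d t : ℝ}

lemma rpowDecay_quarter_pow_four (ht : 0 < 1 + t) :
    rpowDecay (1 / 4) 1 d t ^ 4 = d ^ 4 / (1 + t) := by
  rw [rpowDecay, div_pow, ← Real.rpow_natCast ((1 + t) ^ (1 / 4 : ℝ)) 4, ← Real.rpow_mul ht.le]
  norm_num

lemma abs_deriv_rpowDecay_quarter (hd : 0 < d) (ht : 0 < 1 + t) :
    |deriv (rpowDecay (1 / 4) 1 d) t| = rpowDecay (1 / 4) 1 d t ^ 5 / (4 * d ^ 4) := by
  have ha := rpowDecay_pos (b := 1 / 4) hd ht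
  rw [(hasDerivAt_rpowDecay ht).deriv, pow_succ, rpowDecay_quarter_pow_four ht, abs_div,
    abs_mul, abs_neg, abs_of_pos ha, abs_of_pos ht]
  field_simp
  norm_num

lemma rpowDecay_quarter_le (hd : 0 < d) (ht : 0 ≤ t) : rpowDecay (1 / 4) 1 d t ≤ d :=
  div_le_self hd.le (Real.one_le_rpow (by linarith) (by norm_num))

end quarterDecay

section Inequalities

variable {a d δ lam : ℝ}

lemma pow_five_div_le_pow_three_div (ha : 0 < a) (had : a ≤ d) (hd : 1 ≤ d) :
    a ^ 5 / (4 * d ^ 4) ≤ a ^ 3 / 4 := by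
  have had2 : a ^ 2 ≤ d ^ 4 := calc
    a ^ 2 ≤ d ^ 2 := pow_le_pow_left₀ ha.le had 2
    _ ≤ d ^ 4 := pow_le_pow_right₀ hd (by norm_num)
  rw [div_le_div_iff₀ (by positivity) (by norm_num)]
  nlinarith [pow_pos ha 3]

lemma half_sq_le_sq_sub (ha : 0 < a) (hδ : δ ≤ a ^ 3 / 4) : a ^ 2 / 2 ≤ a ^ 2 - 2 * δ / a := by
  have : 2 * δ / a ≤ a ^ 2 / 2 := by
    rw [div_le_iff₀ ha]
    linarith
  linarith

lemma mul_le_div_mul_sq_sub {c₀ M₁ : ℝ} (ha : 0 < a) (hδ : δ ≤ a ^ 3 / 4)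
    (hlam0 : 0 ≤ lam) (hlam : 4 * (c₀ * (M₁ + a)) ≤ lam) :
    c₀ * (M₁ + a) ≤ lam / (2 * a ^ 2) * (a ^ 2 - 2 * δ / a) := by
  calc c₀ * (M₁ + a) ≤ lam / (2 * a ^ 2) * (a ^ 2 / 2) := by
        field_simp
        linarith
    _ ≤ lam / (2 * a ^ 2) * (a ^ 2 - 2 * δ / a) := by
        gcongr
        exact half_sq_le_sq_sub ha hδ

lemma mul_div_le_div_mul_sq_sub {c₁ : ℝ} (ha : 0 < a) (had : a ≤ d) (hd : 1 ≤ d)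
    (hlam : 0 < lam) (hc₁ : c₁ * lam ≤ d ^ 4) :
    c₁ * (a ^ 5 / (4 * d ^ 4)) / a ≤
      a ^ 2 / (2 * lam) * (a ^ 2 - 2 * (a ^ 5 / (4 * d ^ 4)) / a) := by
  have hd0 : 0 < d := by linarith
  calc c₁ * (a ^ 5 / (4 * d ^ 4)) / a = c₁ * a ^ 4 / (4 * d ^ 4) := by
        field_simp
    _ ≤ a ^ 4 / (4 * lam) := by
        rw [div_le_div_iff₀ (by positivity) (by positivity)]
        nlinarith [mul_le_mul_of_nonneg_left hc₁ (by positivity : 0 ≤ 4 * a ^ 4)]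
    _ = a ^ 2 / (2 * lam) * (a ^ 2 / 2) := by
        field_simp
        ring
    _ ≤ a ^ 2 / (2 * lam) * (a ^ 2 - 2 * (a ^ 5 / (4 * d ^ 4)) / a) := by
        gcongr
        exact half_sq_le_sq_sub ha (pow_five_div_le_pow_three_div ha had hd)

end Inequalities

/-- Since `p + q d ≤ (p + q) d` for `d ≥ 1`, the choice `d = 1 + (p + q)(c + g)` makes
`(c + g)(p + q d) ≤ (d - 1) d < d ^ 2`. -/
lemma exists_mul_affine_le_pow_four_and_lt_sq {p q c g : ℝ} (hp : 0 ≤ p) (hq : 0 ≤ q)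
    (hc : 0 ≤ c) (hg : 0 ≤ g) :
    ∃ d : ℝ, 1 ≤ d ∧ c * (p + q * d) ≤ d ^ 4 ∧ g * (p + q * d) < d ^ 2 := by
  set d := 1 + (p + q) * (c + g) with hd_def
  have hd : 1 ≤ d := by nlinarith [mul_nonneg (add_nonneg hp hq) (add_nonneg hc hg)]
  have hlin : p + q * d ≤ (p + q) * d := by nlinarith
  have hkey : (c + g) * (p + q * d) < d ^ 2 := calc
    (c + g) * (p + q * d) ≤ (c + g) * ((p + q) * d) := by gcongr
    _ = (d - 1) * d := by rw [hd_def]; ring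
    _ < d ^ 2 := by nlinarith
  have hsq : d ^ 2 ≤ d ^ 4 := pow_le_pow_right₀ hd (by norm_num)
  have hnonneg : 0 ≤ p + q * d := by positivity
  refine ⟨d, hd, ?_, ?_⟩ <;> nlinarith [mul_nonneg hc hnonneg, mul_nonneg hg hnonneg]

theorem dsm_parameter_choice_continuous_general
    {H : Type*} [NormedAddCommGroup H] [InnerProductSpace ℝ H]
    (M₁ c₀ c₁ g₀ : ℝ) (hM₁ : 0 < M₁) (hc₀ : 0 < c₀) (hc₁ : 0 < c₁) (hg₀ : 0 < g₀)
    (y : H) :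
    ∃ lam : ℝ, 0 < lam ∧ ∃ a : ℝ → ℝ,
      (∃ b c d : ℝ, 0 < b ∧ b ≤ 1 / 4 ∧ 1 ≤ c ∧ 0 < d ∧
          ∀ t : ℝ, a t = d / (c + t) ^ b) ∧
      ContDiffOn ℝ 1 a (Ici (0 : ℝ)) ∧
      (∀ t ∈ Ici (0 : ℝ), 0 < a t) ∧
      StrictAntiOn a (Ici (0 : ℝ)) ∧
      Tendsto a atTop (𝓝 0) ∧
      (∀ t ∈ Ici (0 : ℝ), |deriv a t| ≤ a t ^ 3 / 4) ∧
      M₁ / ‖y‖ ≤ lam ∧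
      (∀ t ∈ Ici (0 : ℝ),
        c₀ * (M₁ + a t) ≤ lam / (2 * a t ^ 2) * (a t ^ 2 - 2 * |deriv a t| / a t)) ∧
      (∀ t ∈ Ici (0 : ℝ),
        c₁ * |deriv a t| / a t ≤ a t ^ 2 / (2 * lam) * (a t ^ 2 - 2 * |deriv a t| / a t)) ∧
      lam / a 0 ^ 2 * g₀ < 1 := by
  have hm : 0 ≤ M₁ / ‖y‖ := div_nonneg hM₁.le (norm_nonneg y)
  obtain ⟨d, hd, hc₁d, hg₀d⟩ := exists_mul_affine_le_pow_four_and_lt_sq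
    (add_nonneg hm (by positivity : 0 ≤ 4 * c₀ * M₁)) (by positivity : 0 ≤ 4 * c₀)
    hc₁.le hg₀.le
  have hd0 : 0 < d := by linarith
  set lam := M₁ / ‖y‖ + 4 * c₀ * M₁ + 4 * c₀ * d with hlam
  set a := rpowDecay (1 / 4) 1 d
  have hIci : Ici (0 : ℝ) ⊆ Ioi (-1) := Ici_subset_Ioi.mpr (by norm_num)
  have hpos : ∀ t ∈ Ici (0 : ℝ), 0 < 1 + t := fun t ht => by rw [mem_Ici] at ht; linarith
  have ha : ∀ t ∈ Ici (0 : ℝ), 0 < a t := fun t ht => rpowDecay_pos hd0 (hpos t ht)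
  have had : ∀ t ∈ Ici (0 : ℝ), a t ≤ d := fun t ht => rpowDecay_quarter_le hd0 ht
  have hderiv : ∀ t ∈ Ici (0 : ℝ), |deriv a t| = a t ^ 5 / (4 * d ^ 4) :=
    fun t ht => abs_deriv_rpowDecay_quarter hd0 (hpos t ht)
  have ha0 : a 0 = d := by simp [a, rpowDecay]
  refine ⟨lam, by positivity, a, ⟨1 / 4, 1, d, by norm_num, le_rfl, le_rfl, hd0, fun _ => rfl⟩,
    contDiffOn_rpowDecay.mono hIci, ha, (strictAntiOn_rpowDecay (by norm_num) hd0).mono hIci,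
    tendsto_rpowDecay_atTop (by norm_num), fun t ht => ?_,
    by linarith [mul_pos hc₀ hM₁, mul_pos hc₀ hd0], fun t ht => ?_, fun t ht => ?_, ?_⟩
  · rw [hderiv t ht]
    exact pow_five_div_le_pow_three_div (ha t ht) (had t ht) hd
  · rw [hderiv t ht]
    refine mul_le_div_mul_sq_sub (ha t ht) (pow_five_div_le_pow_three_div (ha t ht) (had t ht) hd)
      (by positivity) ?_
    nlinarith [mul_le_mul_of_nonneg_left (had t ht) hc₀.le]
  · rw [hderiv t ht]
    exact mul_div_le_div_mul_sq_sub (ha t ht) (had t ht) hd (by positivity) (by linarith)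
  · rw [ha0, div_mul_eq_mul_div, div_lt_one (by positivity)]
    linarith

/-- Let `M₁, c₀, c₁, g₀` be positive constants and `y ≠ 0` an element of
a real Hilbert space `H`.  Then there exist `λ > 0` and a function `a ∈ C¹[0, ∞)` with
`a(t) > 0`, `a` strictly decreasing, `a(t) → 0` as `t → ∞`, and `|a′(t)| ≤ a(t)³/4`, such
that: (i) `M₁/‖y‖ ≤ λ`; (ii) `c₀(M₁ + a(t)) ≤ (λ/(2a(t)²))(a(t)² - 2|a′(t)|/a(t))`;
(iii) `c₁|a′(t)|/a(t) ≤ (a(t)²/(2λ))(a(t)² - 2|a′(t)|/a(t))`; and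
(iv) `(λ/a(0)²)g₀ < 1`.  In particular, functions of the form `a(t) = d/(c+t)^b` with
`0 < b ≤ 1/4`, `c ≥ 1` and `d` sufficiently large can be chosen. -/
theorem dsm_parameter_choice_continuous
    {H : Type*} [NormedAddCommGroup H] [InnerProductSpace ℝ H]
    (M₁ c₀ c₁ g₀ : ℝ) (hM₁ : 0 < M₁) (hc₀ : 0 < c₀) (hc₁ : 0 < c₁) (hg₀ : 0 < g₀)
    (y : H) (hy : y ≠ 0) :
    ∃ lam : ℝ, 0 < lam ∧ ∃ a : ℝ → ℝ,
      (∃ b c d : ℝ, 0 < b ∧ b ≤ 1 / 4 ∧ 1 ≤ c ∧ 0 < d ∧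
          ∀ t : ℝ, a t = d / (c + t) ^ b) ∧
      ContDiffOn ℝ 1 a (Ici (0 : ℝ)) ∧
      (∀ t ∈ Ici (0 : ℝ), 0 < a t) ∧
      StrictAntiOn a (Ici (0 : ℝ)) ∧
      Tendsto a atTop (𝓝 0) ∧
      (∀ t ∈ Ici (0 : ℝ), |deriv a t| ≤ a t ^ 3 / 4) ∧
      M₁ / ‖y‖ ≤ lam ∧
      (∀ t ∈ Ici (0 : ℝ),
        c₀ * (M₁ + a t) ≤ lam / (2 * a t ^ 2) * (a t ^ 2 - 2 * |deriv a t| / a t)) ∧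
      (∀ t ∈ Ici (0 : ℝ),
        c₁ * |deriv a t| / a t ≤ a t ^ 2 / (2 * lam) * (a t ^ 2 - 2 * |deriv a t| / a t)) ∧
      lam / a 0 ^ 2 * g₀ < 1 :=
  dsm_parameter_choice_continuous_general M₁ c₀ c₁ g₀ hM₁ hc₀ hc₁ hg₀ y
end

section
/- Let M₁, c₀, c₁, α̃ be positive constants, let y ≠ 0 be an element of a real Hilbert space H, and let β ≥ 0 be a given number (playing the role of ‖f_δ − F(0)‖). Then there exist λ > 0 and a strictly decreasing sequence of positive numbers (a_n)_{n≥0} with a_n → 0 such that: (i) a_n/a_{n+1} ≤ 2 for all n ≥ 0; (ii) β ≤ a₀³/λ; (iii) M₁/λ ≤ ‖y‖; (iv) c₀(M₁ + a₀)/λ ≤ 1/2; (v) a_n²/λ − α̃ a_n⁴/(2λ) + c₁(a_n − a_{n+1})/a_{n+1} ≤ a_{n+1}²/λ for all n ≥ 0. In particular, a sequence of the form a_n = a₀/(1+n)^{1/4} with a₀ sufficiently large can be chosen. -/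
/-!
With `x = 1/(1+n)` the sequence `aₙ = a₀ (1+n)^(-1/4)` satisfies `aₙ⁴ = a₀⁴ x` and
`(aₙ / aₙ₊₁)⁴ = 1 + x ≤ (1 + x/4)⁴`, so the relative decrease `(aₙ - aₙ₊₁)/aₙ₊₁` is at most `x/4`
and `aₙ² - aₙ₊₁² ≤ a₀² x/2`. Every term of inequality (v) is therefore `x` times a quantity
depending on `a₀` and `λ` only, and (v) reduces to `a₀² + c₁λ/2 ≤ α̃ a₀⁴`. Taking
`λ = M₁/‖y‖ + 2c₀(M₁ + a₀)`, which is affine in `a₀`, this and `βλ ≤ a₀³` hold for all large `a₀`.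
-/

open Filter Topology

lemma le_one_add_div_four_of_pow_four_le {r x : ℝ} (hr : 0 ≤ r) (hx : 0 ≤ x)
    (h : r ^ 4 ≤ 1 + x) : r ≤ 1 + x / 4 := by
  have hbernoulli : 1 + x ≤ (1 + x / 4) ^ 4 := by
    have := one_add_mul_le_pow (show (-2 : ℝ) ≤ x / 4 by linarith) 4
    push_cast at this
    linarith
  exact (pow_le_pow_iff_left₀ hr (by positivity) (by norm_num)).1 (h.trans hbernoulli)

noncomputable def quarticRootDecay (a₀ : ℝ) (n : ℕ) : ℝ :=
  a₀ / (1 + (n : ℝ)) ^ ((1 : ℝ) / 4)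

section QuarticRootDecay

variable {a₀ : ℝ}

lemma quarticRootDecay_zero (a₀ : ℝ) : quarticRootDecay a₀ 0 = a₀ := by
  simp [quarticRootDecay]

lemma quarticRootDecay_pos (ha₀ : 0 < a₀) (n : ℕ) : 0 < quarticRootDecay a₀ n := by
  unfold quarticRootDecay
  positivity

lemma quarticRootDecay_strictAnti (ha₀ : 0 < a₀) : StrictAnti (quarticRootDecay a₀) :=
  strictAnti_nat_of_succ_lt fun n => by
    unfold quarticRootDecay
    apply div_lt_div_of_pos_left ha₀ (by positivity)
    exact Real.rpow_lt_rpow (by positivity) (by push_cast; linarith) (by norm_num)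

lemma tendsto_quarticRootDecay (a₀ : ℝ) : Tendsto (quarticRootDecay a₀) atTop (𝓝 0) :=
  tendsto_const_nhds.div_atTop <| (tendsto_rpow_atTop (by norm_num)).comp
    (tendsto_atTop_add_const_left _ 1 tendsto_natCast_atTop_atTop)

lemma quarticRootDecay_pow_four (a₀ : ℝ) (n : ℕ) :
    quarticRootDecay a₀ n ^ 4 = a₀ ^ 4 * (1 + (n : ℝ))⁻¹ := by
  have hroot : ((1 + (n : ℝ)) ^ ((1 : ℝ) / 4)) ^ 4 = 1 + n := by
    rw [← Real.rpow_natCast, ← Real.rpow_mul (by positivity)]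
    norm_num
  rw [quarticRootDecay, div_pow, hroot, div_eq_mul_inv]

lemma quarticRootDecay_div_succ_le (ha₀ : 0 < a₀) (n : ℕ) :
    quarticRootDecay a₀ n / quarticRootDecay a₀ (n + 1) ≤ 1 + (1 + (n : ℝ))⁻¹ / 4 := by
  apply le_one_add_div_four_of_pow_four_le
    (div_pos (quarticRootDecay_pos ha₀ n) (quarticRootDecay_pos ha₀ (n + 1))).le
    (by positivity) (le_of_eq ?_)
  rw [div_pow, quarticRootDecay_pow_four, quarticRootDecay_pow_four]
  push_cast
  field_simp
  ring

lemma quarticRootDecay_div_succ_le_two (ha₀ : 0 < a₀) (n : ℕ) :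
    quarticRootDecay a₀ n / quarticRootDecay a₀ (n + 1) ≤ 2 := by
  have : (1 + (n : ℝ))⁻¹ ≤ 1 := inv_le_one_of_one_le₀ (by simp)
  linarith [quarticRootDecay_div_succ_le ha₀ n]

end QuarticRootDecay

/-- One step of inequality (v), for consecutive terms `p ≥ q` of a sequence with `p⁴ = A⁴ x`. -/
lemma sq_div_sub_add_rel_decrease_le {lam c₁ α p q x A : ℝ} (hlam : 0 < lam) (hc₁ : 0 ≤ c₁)
    (hx : 0 ≤ x) (hq : 0 < q) (hqp : q ≤ p) (hpA : p ≤ A) (hratio : p / q ≤ 1 + x / 4)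
    (hp4 : p ^ 4 = A ^ 4 * x) (hA : A ^ 2 + c₁ / 2 * lam ≤ α * A ^ 4) :
    p ^ 2 / lam - α * p ^ 4 / (2 * lam) + c₁ * (p - q) / q ≤ q ^ 2 / lam := by
  have hrel : c₁ * (p - q) / q ≤ c₁ * (x / 4) := by
    rw [mul_div_assoc, sub_div, div_self hq.ne']
    gcongr
    linarith
  have hsq : p ^ 2 - q ^ 2 ≤ A ^ 2 * x / 2 := by
    have hdiff : p - q ≤ p * (x / 4) := by
      rw [div_le_iff₀ hq] at hratio
      nlinarith
    have hpA2 : p ^ 2 ≤ A ^ 2 := pow_le_pow_left₀ (hq.le.trans hqp) hpA 2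
    nlinarith
  have hscale : (A ^ 2 + c₁ / 2 * lam) * x ≤ α * A ^ 4 * x := mul_le_mul_of_nonneg_right hA hx
  calc p ^ 2 / lam - α * p ^ 4 / (2 * lam) + c₁ * (p - q) / q
      = (p ^ 2 - q ^ 2 - α * (A ^ 4 * x) / 2) / lam + c₁ * (p - q) / q + q ^ 2 / lam := by
        rw [hp4]; field_simp; ring
    _ ≤ (A ^ 2 * x / 2 - α * (A ^ 4 * x) / 2) / lam + c₁ * (x / 4) + q ^ 2 / lam := by
        gcongr
    _ = ((A ^ 2 + c₁ / 2 * lam) * x - α * A ^ 4 * x) / (2 * lam) + q ^ 2 / lam := by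
        field_simp; ring
    _ ≤ q ^ 2 / lam := by
        have : ((A ^ 2 + c₁ / 2 * lam) * x - α * A ^ 4 * x) / (2 * lam) ≤ 0 :=
          div_nonpos_of_nonpos_of_nonneg (by linarith) (by positivity)
        linarith

lemma eventually_mul_affine_le_cube {β C D : ℝ} (hβ : 0 ≤ β) (hC : 0 ≤ C) :
    ∀ᶠ A in atTop, β * (C + D * A) ≤ A ^ 3 := by
  filter_upwards [eventually_ge_atTop 1, eventually_ge_atTop (β * (C + D))] with A hA hβA
  have hlin : C + D * A ≤ (C + D) * A := by nlinarith
  calc β * (C + D * A) ≤ β * (C + D) * A := by rw [mul_assoc]; gcongr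
    _ ≤ A * A := mul_le_mul_of_nonneg_right hβA (by linarith)
    _ ≤ A ^ 3 := by nlinarith

lemma eventually_sq_add_affine_le_quartic {c C D α : ℝ} (hc : 0 ≤ c) (hC : 0 ≤ C) (hD : 0 ≤ D)
    (hα : 0 < α) : ∀ᶠ A in atTop, A ^ 2 + c * (C + D * A) ≤ α * A ^ 4 := by
  filter_upwards [eventually_ge_atTop 1, eventually_ge_atTop ((1 + c * (C + D)) / α)]
    with A hA hαA
  have hA2 : A ≤ A ^ 2 := by nlinarith
  have hlin : C + D * A ≤ (C + D) * A ^ 2 := by nlinarith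
  have hK : 1 + c * (C + D) ≤ α * A ^ 2 := by
    rw [div_le_iff₀ hα] at hαA
    nlinarith
  calc A ^ 2 + c * (C + D * A) ≤ (1 + c * (C + D)) * A ^ 2 := by nlinarith
    _ ≤ α * A ^ 2 * A ^ 2 := by gcongr
    _ = α * A ^ 4 := by ring

/-- Let `M₁, c₀, c₁, α̃` be positive constants, `y ≠ 0` an element of a
real Hilbert space `H`, and `β ≥ 0` (playing the role of `‖f_δ - F(0)‖`).  Then there
exist `λ > 0` and a strictly decreasing sequence of positive numbers `(a_n)` with
`a_n → 0` such that: (i) `a_n/a_{n+1} ≤ 2`; (ii) `β ≤ a₀³/λ`; (iii) `M₁/λ ≤ ‖y‖`;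
(iv) `c₀(M₁ + a₀)/λ ≤ 1/2`; and
(v) `a_n²/λ - α̃a_n⁴/(2λ) + c₁(a_n - a_{n+1})/a_{n+1} ≤ a_{n+1}²/λ` for all `n`.
In particular, a sequence of the form `a_n = a₀/(1+n)^{1/4}` with `a₀` sufficiently large
can be chosen. -/
theorem dsm_parameter_choice_discrete
    {H : Type*} [NormedAddCommGroup H] [InnerProductSpace ℝ H]
    (M₁ c₀ c₁ αtil β : ℝ) (hM₁ : 0 < M₁) (hc₀ : 0 < c₀) (hc₁ : 0 < c₁)
    (hαtil : 0 < αtil) (hβ : 0 ≤ β) (y : H) (hy : y ≠ 0) :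
    ∃ lam : ℝ, 0 < lam ∧ ∃ a : ℕ → ℝ,
      (∃ a₀ : ℝ, 0 < a₀ ∧ ∀ n : ℕ, a n = a₀ / (1 + (n : ℝ)) ^ ((1 : ℝ) / 4)) ∧
      (∀ n : ℕ, 0 < a n) ∧
      StrictAnti a ∧
      Tendsto a atTop (𝓝 0) ∧
      (∀ n : ℕ, a n / a (n + 1) ≤ 2) ∧
      β ≤ a 0 ^ 3 / lam ∧
      M₁ / lam ≤ ‖y‖ ∧
      c₀ * (M₁ + a 0) / lam ≤ 1 / 2 ∧
      (∀ n : ℕ,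
        a n ^ 2 / lam - αtil * a n ^ 4 / (2 * lam) + c₁ * (a n - a (n + 1)) / a (n + 1)
          ≤ a (n + 1) ^ 2 / lam) := by
  have hy' : 0 < ‖y‖ := norm_pos_iff.mpr hy
  obtain ⟨a₀, hβa₀, hαa₀, ha₀_one⟩ :=
    ((eventually_mul_affine_le_cube hβ (C := M₁ / ‖y‖ + 2 * c₀ * M₁) (D := 2 * c₀)
      (by positivity)).and
    ((eventually_sq_add_affine_le_quartic (c := c₁ / 2) (C := M₁ / ‖y‖ + 2 * c₀ * M₁)
      (D := 2 * c₀) (by positivity) (by positivity) (by positivity) hαtil).and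
    (eventually_ge_atTop 1))).exists
  set lam := M₁ / ‖y‖ + 2 * c₀ * M₁ + 2 * c₀ * a₀
  set a := quarticRootDecay a₀
  have hlam : 0 < lam := by positivity
  have ha₀ : 0 < a₀ := by linarith
  have hanti := quarticRootDecay_strictAnti ha₀
  have ha0 : a 0 = a₀ := quarticRootDecay_zero a₀
  refine ⟨lam, hlam, a, ⟨a₀, ha₀, fun n => rfl⟩, quarticRootDecay_pos ha₀, hanti,
    tendsto_quarticRootDecay a₀, quarticRootDecay_div_succ_le_two ha₀, ?_, ?_, ?_, fun n => ?_⟩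
  · rw [ha0, le_div_iff₀ hlam]
    exact hβa₀
  · rw [div_le_iff₀ hlam, ← div_le_iff₀' hy']
    linarith [show 0 ≤ 2 * c₀ * M₁ + 2 * c₀ * a₀ by positivity]
  · rw [ha0, div_le_iff₀ hlam]
    linarith [show 0 ≤ M₁ / ‖y‖ by positivity]
  · refine sq_div_sub_add_rel_decrease_le hlam hc₁.le (by positivity)
      (quarticRootDecay_pos ha₀ _) (hanti (Nat.lt_succ_self n)).le ?_
      (quarticRootDecay_div_succ_le ha₀ n) (quarticRootDecay_pow_four a₀ n) (by linarith)
    exact ha0 ▸ hanti.antitone (Nat.zero_le n)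
end

section
/- Let H be a real Hilbert space, F : H → H a continuous monotone operator, and f_δ ∈ H. Let 0 < a₂ < a₁ and let V₁, V₂ be the unique solutions of F(V₁) + a₁V₁ = f_δ and F(V₂) + a₂V₂ = f_δ. Then ‖V₁ − V₂‖ ≤ ((a₁ − a₂)/a₂) ‖V₁‖. -/
open Filter Topology Set
open scoped RealInnerProductSpace

/-- Let `H` be a real Hilbert space, `F : H → H` a continuous monotone
operator, and `f_δ ∈ H`.  Let `0 < a₂ < a₁` and let `V₁, V₂` be the unique solutions of
`F(V₁) + a₁V₁ = f_δ` and `F(V₂) + a₂V₂ = f_δ`.  Then `‖V₁ - V₂‖ ≤ ((a₁ - a₂)/a₂)‖V₁‖`. -/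
theorem dsm_regularized_solutions_difference_bound
    {H : Type*} [NormedAddCommGroup H] [InnerProductSpace ℝ H] [CompleteSpace H]
    (F : H → H) (hFcont : Continuous F)
    (hFmono : ∀ u v : H, 0 ≤ ⟪F u - F v, u - v⟫)
    (fδ : H) (a₁ a₂ : ℝ) (ha₂ : 0 < a₂) (ha₁₂ : a₂ < a₁)
    (V₁ V₂ : H) (hV₁ : F V₁ + a₁ • V₁ = fδ) (hV₂ : F V₂ + a₂ • V₂ = fδ) :
    ‖V₁ - V₂‖ ≤ (a₁ - a₂) / a₂ * ‖V₁‖ := by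
  set w := V₁ - V₂ with hw
  have hdiff : F V₁ - F V₂ + (a₂ • w + (a₁ - a₂) • V₁) = 0 := by
    have : (F V₁ + a₁ • V₁) - (F V₂ + a₂ • V₂) = 0 := by rw [hV₁, hV₂]; abel
    rw [← this, hw]
    simp only [sub_smul, smul_sub]
    abel
  have hinner : ⟪F V₁ - F V₂, w⟫ + (a₂ * ⟪w, w⟫ + (a₁ - a₂) * ⟪V₁, w⟫) = 0 := by
    have := congrArg (fun x => ⟪x, w⟫) hdiff
    simpa [inner_add_left, real_inner_smul_left] using this
  have hmono := hFmono V₁ V₂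
  have key : a₂ * ‖w‖ ^ 2 ≤ (a₁ - a₂) * (‖V₁‖ * ‖w‖) := by
    have h1 : a₂ * ⟪w, w⟫ ≤ -((a₁ - a₂) * ⟪V₁, w⟫) := by linarith
    have h2 : -((a₁ - a₂) * ⟪V₁, w⟫) ≤ (a₁ - a₂) * (‖V₁‖ * ‖w‖) := by
      have := abs_real_inner_le_norm V₁ w
      have h3 : -⟪V₁, w⟫ ≤ ‖V₁‖ * ‖w‖ := by
        have := neg_abs_le (⟪V₁, w⟫); linarith
      nlinarith
    calc a₂ * ‖w‖ ^ 2 = a₂ * ⟪w, w⟫ := by rw [real_inner_self_eq_norm_sq]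
      _ ≤ _ := le_trans h1 h2
  rcases eq_or_lt_of_le (norm_nonneg w) with h0 | h0
  · rw [← h0]
    have : (0:ℝ) ≤ (a₁ - a₂) / a₂ * ‖V₁‖ := mul_nonneg (div_nonneg (by linarith) ha₂.le) (norm_nonneg _)
    linarith
  · rw [div_mul_eq_mul_div, le_div_iff₀ ha₂]
    nlinarith
end
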